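/- arXiv:2107.08786 — 5 statements merged into one kernel-verified Lean document; each statement's English description precedes it below -/
import Mathlib

section
/- Let n ≥ 4 be even. For each of the six origamis O₁ = ((n-1,n),(1,2,…,n-1)), O₂ = ((1,2,…,n),(1,n-1,n-3,…,3,n,n-2,…,2)), O₃ = ((1,2,…,n),(n-1,n)), O₄ = ((1,2,…,n),(2,3,…,n)), O₅ = ((1,2,…,n),(2,n,n-1,…,3)), O₆ = ((2,3,…,n),(1,2,n,n-1,…,3)), the commutator h·v·h⁻¹·v⁻¹ of the pair (h,v) is a 3-cycle; that is, each of these six origamis lies in the stratum H(2). -/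
open Equiv

/-- The permutation of `Fin n` given by 1-based cycle notation `(a1, ..., ak)`:
each listed square `a` (an element of `{1, ..., n}`) corresponds to `a - 1 : Fin n`,
and the cycle sends each listed element to the next one, the last back to the first. -/
def cyc (n : ℕ) (l : List ℕ) : Equiv.Perm (Fin n) :=
  (l.filterMap fun a => if h : a - 1 < n then some (⟨a - 1, h⟩ : Fin n) else none).formPerm

/-- Equivalence of origami pairs by simultaneous conjugation. -/
def OrigamiEquiv {n : ℕ} (p q : Equiv.Perm (Fin n) × Equiv.Perm (Fin n)) : Prop :=
  ∃ g : Equiv.Perm (Fin n), g * p.1 * g⁻¹ = q.1 ∧ g * p.2 * g⁻¹ = q.2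

/-- The action of `T`: `T(h,v) = (h, v h⁻¹)`. -/
def Tact {n : ℕ} (p : Equiv.Perm (Fin n) × Equiv.Perm (Fin n)) :
    Equiv.Perm (Fin n) × Equiv.Perm (Fin n) := (p.1, p.2 * p.1⁻¹)

/-- The action of `T⁻¹`: `T⁻¹(h,v) = (h, v h)`. -/
def TinvAct {n : ℕ} (p : Equiv.Perm (Fin n) × Equiv.Perm (Fin n)) :
    Equiv.Perm (Fin n) × Equiv.Perm (Fin n) := (p.1, p.2 * p.1)

/-- The action of `S`: `S(h,v) = (h v⁻¹, v)`. -/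
def Sact {n : ℕ} (p : Equiv.Perm (Fin n) × Equiv.Perm (Fin n)) :
    Equiv.Perm (Fin n) × Equiv.Perm (Fin n) := (p.1 * p.2⁻¹, p.2)

/-- The action of `S⁻¹`: `S⁻¹(h,v) = (h v, v)`. -/
def SinvAct {n : ℕ} (p : Equiv.Perm (Fin n) × Equiv.Perm (Fin n)) :
    Equiv.Perm (Fin n) × Equiv.Perm (Fin n) := (p.1 * p.2, p.2)

/-- `O₁ = ((n-1,n), (1,2,...,n-1))` -/
def OE1 (n : ℕ) : Equiv.Perm (Fin n) × Equiv.Perm (Fin n) :=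
  (cyc n [n - 1, n], cyc n (List.range' 1 (n - 1)))

/-- `O₂ = ((1,2,...,n), (1, n-1, n-3, ..., 3, n, n-2, ..., 2))` for even `n` -/
def OE2 (n : ℕ) : Equiv.Perm (Fin n) × Equiv.Perm (Fin n) :=
  (cyc n (List.range' 1 n),
   cyc n (1 :: ((List.range' 3 ((n - 2) / 2) 2).reverse ++
     n :: (List.range' 2 ((n - 2) / 2) 2).reverse)))

/-- `O₃ = ((1,2,...,n), (n-1,n))` -/
def OE3 (n : ℕ) : Equiv.Perm (Fin n) × Equiv.Perm (Fin n) :=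
  (cyc n (List.range' 1 n), cyc n [n - 1, n])

/-- `O₄ = ((1,2,...,n), (2,3,...,n))` -/
def OE4 (n : ℕ) : Equiv.Perm (Fin n) × Equiv.Perm (Fin n) :=
  (cyc n (List.range' 1 n), cyc n (List.range' 2 (n - 1)))

/-- `O₅ = ((1,2,...,n), (2, n, n-1, ..., 3))` -/
def OE5 (n : ℕ) : Equiv.Perm (Fin n) × Equiv.Perm (Fin n) :=
  (cyc n (List.range' 1 n), cyc n (2 :: (List.range' 3 (n - 2)).reverse))

/-- `O₆ = ((2,3,...,n), (1, 2, n, n-1, ..., 3))` -/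
def OE6 (n : ℕ) : Equiv.Perm (Fin n) × Equiv.Perm (Fin n) :=
  (cyc n (List.range' 2 (n - 1)), cyc n (1 :: 2 :: (List.range' 3 (n - 2)).reverse))


namespace OgA
open List
variable {α : Type*} [DecidableEq α]

theorem formPerm_map (f : Perm α) : ∀ l : List α, (l.map f).formPerm = f * l.formPerm * f⁻¹
  | [] => by simp
  | [x] => by simp
  | x :: y :: l => by
    rw [map_cons, map_cons, formPerm_cons_cons, formPerm_cons_cons, ← map_cons,
      formPerm_map f (y :: l), swap_apply_apply]
    group

theorem formPerm_append_comm (u v : List α) (h : (u ++ v).Nodup) :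
    (u ++ v).formPerm = (v ++ u).formPerm := by
  rw [← rotate_append_length_eq u v, formPerm_rotate _ h]

theorem key1 (x y z : α) (m : List α) :
    (x :: z :: m).formPerm * ((y :: z :: m).formPerm)⁻¹ = swap x z * swap y z := by
  rw [formPerm_cons_cons, formPerm_cons_cons, mul_inv_rev, swap_inv]
  group

theorem keyL (a : α) (A B : List α) (hA : A ≠ []) (hB : B ≠ []) (h : (A ++ a :: B).Nodup) :
    (A ++ a :: B).formPerm * ((A ++ B ++ [a]).formPerm)⁻¹
      = swap a (B.head hB) * swap a (A.head hA) := by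
  have hperm : (A ++ a :: B) ~ (A ++ B ++ [a]) :=
    perm_middle.trans ((perm_append_singleton a (A ++ B)).symm)
  have h2 : (A ++ B ++ [a]).Nodup := hperm.nodup h
  have hAB : (A ++ B).Nodup := by
    have : (A ++ B ++ [a]) ~ a :: (A ++ B) := perm_append_singleton a (A ++ B)
    exact ((this.nodup h2).of_cons)
  have hBA : (B ++ A).Nodup := (perm_append_comm.nodup hAB)
  obtain ⟨a0, A', rfl⟩ := exists_cons_of_ne_nil hA
  obtain ⟨b0, B', rfl⟩ := exists_cons_of_ne_nil hB
  rw [formPerm_append_comm _ _ h, formPerm_append_comm _ _ h2]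
  simp only [cons_append, head_cons, nil_append]
  rw [formPerm_cons_cons, formPerm_cons_cons]
  have : (b0 :: (B' ++ a0 :: A')).formPerm = (a0 :: (A' ++ b0 :: B')).formPerm := by
    rw [show (b0 :: (B' ++ a0 :: A') : List α) = (b0 :: B') ++ (a0 :: A') by simp,
      show (a0 :: (A' ++ b0 :: B') : List α) = (a0 :: A') ++ (b0 :: B') by simp]
    exact formPerm_append_comm _ _ hBA
  rw [this, mul_inv_rev, swap_inv]
  group

theorem keyL' (a : α) (A B : List α) (hA : A ≠ []) (hB : B ≠ []) (h : (A ++ a :: B).Nodup) :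
    (A ++ B ++ [a]).formPerm * ((A ++ a :: B).formPerm)⁻¹
      = swap a (A.head hA) * swap a (B.head hB) := by
  have := congrArg Inv.inv (keyL a A B hA hB h)
  rwa [mul_inv_rev, inv_inv, mul_inv_rev, swap_inv, swap_inv] at this

theorem comm_eq (h v : Perm α) (L : List α) (hv : v = L.formPerm) :
    h * v * h⁻¹ * v⁻¹ = (L.map h).formPerm * (L.formPerm)⁻¹ := by
  rw [formPerm_map, hv]


/-- the 1-based encoding of squares -/
def g (n : ℕ) (hn : 0 < n) (a : ℕ) : Fin n := ⟨(a - 1) % n, Nat.mod_lt _ hn⟩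

theorem g_ne {n : ℕ} (hn : 0 < n) {a b : ℕ} (ha1 : 1 ≤ a) (ha : a ≤ n) (hb1 : 1 ≤ b)
    (hb : b ≤ n) (hab : a ≠ b) : g n hn a ≠ g n hn b := by
  simp only [g, Ne, Fin.mk.injEq]
  rw [Nat.mod_eq_of_lt (by omega), Nat.mod_eq_of_lt (by omega)]
  omega

theorem g_top {n : ℕ} (hn : 0 < n) : g n hn (n + 1) = g n hn 1 := by
  simp [g, Nat.mod_self]

theorem cyc_eq {n : ℕ} (hn : 0 < n) (l : List ℕ) (hl : ∀ a ∈ l, a ≤ n) :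
    cyc n l = (l.map (g n hn)).formPerm := by
  unfold cyc
  congr 1
  induction l with
  | nil => simp
  | cons x xs ih =>
    have hx : x - 1 < n := by have := hl x (mem_cons_self); omega
    rw [filterMap_cons, map_cons, dif_pos hx, ih (fun a ha => hl a (mem_cons_of_mem _ ha))]
    congr 1
    exact congrArg (· :: map (g n hn) xs) (Fin.ext ((Nat.mod_eq_of_lt hx).symm))

theorem nodup_gmap {n : ℕ} (hn : 0 < n) {l : List ℕ} (hl : ∀ a ∈ l, 1 ≤ a ∧ a ≤ n)
    (hnd : l.Nodup) : (l.map (g n hn)).Nodup := by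
  refine hnd.map_on fun x hx y hy hxy => ?_
  by_contra hne
  exact g_ne hn (hl x hx).1 (hl x hx).2 (hl y hy).1 (hl y hy).2 hne hxy

theorem g_not_mem_map {n : ℕ} (hn : 0 < n) {l : List ℕ} {b : ℕ} (hb1 : 1 ≤ b) (hb : b ≤ n)
    (hl : ∀ a ∈ l, 1 ≤ a ∧ a ≤ n ∧ a ≠ b) : g n hn b ∉ l.map (g n hn) := by
  rw [mem_map]
  rintro ⟨a, ha, hab⟩
  exact g_ne hn (hl a ha).1 (hl a ha).2.1 hb1 hb (hl a ha).2.2 hab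

theorem fp_range'_apply {n : ℕ} (hn : 0 < n) {s m a : ℕ} (hs : 1 ≤ s) (hm : 0 < m)
    (hsm : s + m ≤ n + 1) (h1 : s ≤ a) (h2 : a < s + m) :
    ((range' s m).map (g n hn)).formPerm (g n hn a) = g n hn (s + (a + 1 - s) % m) := by
  have hlen : ((range' s m).map (g n hn)).length = m := by simp
  have hin : a - s < m := by omega
  have hnd : ((range' s m).map (g n hn)).Nodup := by
    refine nodup_gmap hn (fun b hb => ?_) (nodup_range' (s := s) (n := m))
    rw [mem_range'_1] at hb
    omega
  have hget : ∀ (i : ℕ) (hi : i < m),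
      ((range' s m).map (g n hn))[i]'(by omega) = g n hn (s + i) := by
    intro i hi
    simp [getElem_range']
  have := formPerm_apply_getElem ((range' s m).map (g n hn)) hnd (a - s) (by omega)
  rw [hget _ hin, hget ((a - s + 1) % ((range' s m).map (g n hn)).length)
      (by rw [hlen]; exact Nat.mod_lt _ hm)] at this
  rw [show s + (a - s) = a by omega] at this
  rw [this, hlen, show a + 1 - s = a - s + 1 from by omega]

theorem map_shift {n : ℕ} (hn : 0 < n) (σ : Perm (Fin n)) (l : List ℕ)
    (hσ : ∀ a ∈ l, σ (g n hn a) = g n hn (a + 1)) :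
    (l.map (g n hn)).map σ = (l.map (· + 1)).map (g n hn) := by
  rw [map_map, map_map]
  exact map_congr_left fun a ha => hσ a ha


theorem r_apply {n : ℕ} (hn : 0 < n) {a : ℕ} (h1 : 1 ≤ a) (h2 : a ≤ n) :
    ((range' 1 n).map (g n hn)).formPerm (g n hn a) = g n hn (a + 1) := by
  rw [fp_range'_apply hn le_rfl hn (by omega) h1 (by omega)]
  by_cases han : a = n
  · subst han
    rw [Nat.add_sub_cancel, Nat.mod_self, Nat.add_zero]
    exact (g_top hn).symm
  · rw [Nat.add_sub_cancel, Nat.mod_eq_of_lt (by omega), Nat.add_comm]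

theorem map_succ_range' (s m step : ℕ) :
    (range' s m step).map (· + 1) = range' (s + 1) m step := by
  rw [show ((· + 1) : ℕ → ℕ) = (fun x => 1 + x) by funext x; omega, map_add_range',
    Nat.add_comm]

theorem rev_range'_cons (s m step : ℕ) :
    (range' s (m + 1) step).reverse = (s + step * m) :: (range' s m step).reverse := by
  rw [range'_concat, reverse_append]
  rfl

theorem rev_range'_concat (s m step : ℕ) :
    (range' s (m + 1) step).reverse = (range' (s + step) m step).reverse ++ [s] := by
  rw [range'_succ, reverse_cons]

theorem map_g_concat_top {n : ℕ} (hn : 0 < n) (L : List ℕ) :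
    (L ++ [n + 1]).map (g n hn) = (L ++ [1]).map (g n hn) := by
  simp [g_top hn]

theorem o3 {n : ℕ} (hn : 4 ≤ n) :
    Perm.IsThreeCycle ((OE3 n).1 * (OE3 n).2 * (OE3 n).1⁻¹ * (OE3 n).2⁻¹) := by
  have hn0 : 0 < n := by omega
  have hv : (OE3 n).2 = ([n - 1, n].map (g n hn0)).formPerm :=
    cyc_eq hn0 _ (by intro a ha; simp at ha; omega)
  have hh : (OE3 n).1 = ((range' 1 n).map (g n hn0)).formPerm :=
    cyc_eq hn0 _ (fun a ha => by rw [mem_range'_1] at ha; omega)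
  rw [comm_eq _ _ _ hv]
  have hmap : ([n - 1, n].map (g n hn0)).map (OE3 n).1 = [g n hn0 n, g n hn0 1] := by
    rw [hh]
    simp only [map_cons, map_nil]
    rw [r_apply hn0 (by omega) (by omega), r_apply hn0 (by omega) le_rfl,
      show n - 1 + 1 = n by omega, g_top]
  rw [hmap]
  simp only [map_cons, map_nil]
  rw [formPerm_pair, formPerm_pair, swap_inv, swap_comm (g n hn0 (n - 1))]
  exact Perm.isThreeCycle_swap_mul_swap_same
    (g_ne hn0 (by omega) le_rfl (by omega) (by omega) (by omega))
    (g_ne hn0 (by omega) le_rfl (by omega) (by omega) (by omega))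
    (g_ne hn0 (by omega) (by omega) (by omega) (by omega) (by omega))


/-- finisher matching `key1` output -/
theorem tc1 {n : ℕ} (hn0 : 0 < n) {a b c : ℕ} (hb1 : 1 ≤ b) (hb : b ≤ n) (hc1 : 1 ≤ c)
    (hc : c ≤ n) (ha1 : 1 ≤ a) (ha : a ≤ n) (hab : a ≠ b) (hac : a ≠ c) (hbc : b ≠ c) :
    Perm.IsThreeCycle (swap (g n hn0 b) (g n hn0 a) * swap (g n hn0 c) (g n hn0 a)) := by
  rw [swap_comm (g n hn0 b), swap_comm (g n hn0 c)]
  exact Perm.isThreeCycle_swap_mul_swap_same (g_ne hn0 ha1 ha hb1 hb hab)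
    (g_ne hn0 ha1 ha hc1 hc hac) (g_ne hn0 hb1 hb hc1 hc hbc)

/-- finisher matching `keyL`/`keyL'` output -/
theorem tc2 {n : ℕ} (hn0 : 0 < n) {a b c : ℕ} (ha1 : 1 ≤ a) (ha : a ≤ n) (hb1 : 1 ≤ b)
    (hb : b ≤ n) (hc1 : 1 ≤ c) (hc : c ≤ n) (hab : a ≠ b) (hac : a ≠ c) (hbc : b ≠ c) :
    Perm.IsThreeCycle (swap (g n hn0 a) (g n hn0 b) * swap (g n hn0 a) (g n hn0 c)) :=
  Perm.isThreeCycle_swap_mul_swap_same (g_ne hn0 ha1 ha hb1 hb hab)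
    (g_ne hn0 ha1 ha hc1 hc hac) (g_ne hn0 hb1 hb hc1 hc hbc)

theorem o4 {n : ℕ} (hn : 4 ≤ n) :
    Perm.IsThreeCycle ((OE4 n).1 * (OE4 n).2 * (OE4 n).1⁻¹ * (OE4 n).2⁻¹) := by
  have hn0 : 0 < n := by omega
  have hv : (OE4 n).2 = ((range' 2 (n - 1)).map (g n hn0)).formPerm :=
    cyc_eq hn0 _ (fun a ha => by rw [mem_range'_1] at ha; omega)
  have hh : (OE4 n).1 = ((range' 1 n).map (g n hn0)).formPerm :=
    cyc_eq hn0 _ (fun a ha => by rw [mem_range'_1] at ha; omega)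
  rw [comm_eq _ _ _ hv]
  have hmap : ((range' 2 (n - 1)).map (g n hn0)).map (OE4 n).1
      = ((range' 3 (n - 2) ++ [1]).map (g n hn0)) := by
    rw [hh, map_shift hn0 _ _ (fun a ha => by
        rw [mem_range'_1] at ha
        exact r_apply hn0 (by omega) (by omega)),
      map_succ_range', show n - 1 = (n - 2) + 1 by omega, range'_concat,
      show 3 + 1 * (n - 2) = n + 1 by omega, map_g_concat_top]
  have e3 : range' 3 (n - 2) = 3 :: range' 4 (n - 3) := by
    rw [show n - 2 = (n - 3) + 1 by omega, range'_succ]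
  have hnd : ((range' 3 (n - 2)).map (g n hn0) ++ [1].map (g n hn0)).Nodup := by
    rw [← map_append]
    refine nodup_gmap hn0 (fun a ha => ?_) ?_
    · rcases mem_append.mp ha with h | h
      · rw [mem_range'_1] at h; omega
      · simp at h; omega
    · refine (nodup_range' (s := 3) (n := n - 2)).append (nodup_singleton 1) ?_
      intro a ha hb
      simp only [mem_singleton] at hb
      rw [hb, mem_range'_1] at ha
      omega
  have e1 : ((range' 3 (n - 2) ++ [1]).map (g n hn0)).formPerm
      = ((1 :: 3 :: range' 4 (n - 3)).map (g n hn0)).formPerm := by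
    rw [map_append, formPerm_append_comm _ _ hnd, ← map_append, ← e3]
    rfl
  have e2 : range' 2 (n - 1) = 2 :: 3 :: range' 4 (n - 3) := by
    rw [show n - 1 = (n - 2) + 1 by omega, range'_succ, e3]
  rw [hmap, e1, e2]
  simp only [map_cons]
  rw [key1]
  exact tc1 hn0 (by omega) (by omega) (by omega) (by omega) (by omega) (by omega)
    (by omega) (by omega) (by omega)


theorem o1 {n : ℕ} (hn : 4 ≤ n) :
    Perm.IsThreeCycle ((OE1 n).1 * (OE1 n).2 * (OE1 n).1⁻¹ * (OE1 n).2⁻¹) := by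
  have hn0 : 0 < n := by omega
  have hv : (OE1 n).2 = ((range' 1 (n - 1)).map (g n hn0)).formPerm :=
    cyc_eq hn0 _ (fun a ha => by rw [mem_range'_1] at ha; omega)
  have hh : (OE1 n).1 = swap (g n hn0 (n - 1)) (g n hn0 n) := by
    rw [show (OE1 n).1 = cyc n [n - 1, n] from rfl,
      cyc_eq hn0 _ (by intro a ha; simp at ha; omega)]
    simp only [map_cons, map_nil]
    exact formPerm_pair _ _
  have esplit : range' 1 (n - 1) = range' 1 (n - 2) ++ [n - 1] := by
    conv_lhs => rw [show n - 1 = (n - 2) + 1 by omega, range'_concat]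
    rw [show 1 + 1 * (n - 2) = n - 1 by omega]
  have ec : range' 1 (n - 2) = 1 :: range' 2 (n - 3) := by
    rw [show n - 2 = (n - 3) + 1 by omega, range'_succ]
  rw [comm_eq _ _ _ hv]
  have hmap : ((range' 1 (n - 1)).map (g n hn0)).map (OE1 n).1
      = (range' 1 (n - 2)).map (g n hn0) ++ [g n hn0 n] := by
    rw [hh, esplit, map_append, map_append]
    congr 1
    · rw [map_map]
      refine map_congr_left fun a ha => ?_
      rw [mem_range'_1] at ha
      exact swap_apply_of_ne_of_ne
        (g_ne hn0 (by omega) (by omega) (by omega) (by omega) (by omega))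
        (g_ne hn0 (by omega) (by omega) (by omega) (by omega) (by omega))
    · simp only [map_cons, map_nil]
      rw [swap_apply_left]
  have hnd1 : ((range' 1 (n - 2)).map (g n hn0) ++ [g n hn0 n]).Nodup := by
    rw [show [g n hn0 n] = [n].map (g n hn0) from rfl, ← map_append]
    refine nodup_gmap hn0 (fun a ha => ?_) ?_
    · rcases mem_append.mp ha with h | h
      · rw [mem_range'_1] at h; omega
      · simp at h; omega
    · refine (nodup_range' (s := 1) (n := n - 2)).append (nodup_singleton n) ?_
      intro a ha hb
      simp only [mem_singleton] at hb
      rw [hb, mem_range'_1] at ha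
      omega
  have hnd2 : ((range' 1 (n - 2)).map (g n hn0) ++ [g n hn0 (n - 1)]).Nodup := by
    rw [show [g n hn0 (n - 1)] = [n - 1].map (g n hn0) from rfl, ← map_append, ← esplit]
    exact nodup_gmap hn0 (fun a ha => by rw [mem_range'_1] at ha; omega)
      (nodup_range' (s := 1) (n := n - 1))
  have e1 : ((range' 1 (n - 2)).map (g n hn0) ++ [g n hn0 n]).formPerm
      = ((n :: 1 :: range' 2 (n - 3)).map (g n hn0)).formPerm := by
    rw [formPerm_append_comm _ _ hnd1, ec]
    rfl
  have e2 : ((range' 1 (n - 1)).map (g n hn0)).formPerm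
      = (((n - 1) :: 1 :: range' 2 (n - 3)).map (g n hn0)).formPerm := by
    rw [esplit, map_append]
    simp only [map_cons, map_nil]
    rw [formPerm_append_comm _ _ hnd2, ec]
    rfl
  rw [hmap, e1, e2]
  simp only [map_cons]
  rw [key1]
  exact tc1 hn0 (by omega) (by omega) (by omega) (by omega) (by omega) (by omega)
    (by omega) (by omega) (by omega)

theorem o5 {n : ℕ} (hn : 4 ≤ n) :
    Perm.IsThreeCycle ((OE5 n).1 * (OE5 n).2 * (OE5 n).1⁻¹ * (OE5 n).2⁻¹) := by
  have hn0 : 0 < n := by omega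
  have hbv : ∀ a ∈ (2 :: (range' 3 (n - 2)).reverse), 1 ≤ a ∧ a ≤ n := by
    intro a ha
    rcases mem_cons.mp ha with rfl | h
    · omega
    · rw [mem_reverse, mem_range'_1] at h; omega
  have hv : (OE5 n).2 = ((2 :: (range' 3 (n - 2)).reverse).map (g n hn0)).formPerm :=
    cyc_eq hn0 _ (fun a ha => (hbv a ha).2)
  have hh : (OE5 n).1 = ((range' 1 n).map (g n hn0)).formPerm :=
    cyc_eq hn0 _ (fun a ha => by rw [mem_range'_1] at ha; omega)
  rw [comm_eq _ _ _ hv]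
  have hmap : ((2 :: (range' 3 (n - 2)).reverse).map (g n hn0)).map (OE5 n).1
      = ((3 :: 1 :: (range' 4 (n - 3)).reverse).map (g n hn0)) := by
    rw [hh, map_shift hn0 _ _ (fun a ha =>
      r_apply hn0 (hbv a ha).1 (hbv a ha).2)]
    have hnat : (2 :: (range' 3 (n - 2)).reverse).map (· + 1)
        = 3 :: (n + 1) :: (range' 4 (n - 3)).reverse := by
      rw [map_cons, map_reverse, map_succ_range', show (3 : ℕ) + 1 = 4 from rfl,
        show n - 2 = (n - 3) + 1 by omega, rev_range'_cons,
        show 4 + 1 * (n - 3) = n + 1 by omega]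
    rw [hnat]
    simp [g_top hn0]
  have hndnat : (3 :: 1 :: (range' 4 (n - 3)).reverse).Nodup := by
    simp only [nodup_cons, mem_cons, mem_reverse, mem_range'_1, nodup_reverse]
    refine ⟨?_, ?_, nodup_range' (s := 4) (n := n - 3)⟩ <;> omega
  have hbs : ∀ a ∈ (3 :: 1 :: (range' 4 (n - 3)).reverse), 1 ≤ a ∧ a ≤ n := by
    intro a ha
    rcases mem_cons.mp ha with rfl | h
    · omega
    rcases mem_cons.mp h with rfl | h'
    · omega
    · rw [mem_reverse, mem_range'_1] at h'; omega
  have hnd : ((3 :: 1 :: (range' 4 (n - 3)).reverse).map (g n hn0)).Nodup :=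
    nodup_gmap hn0 hbs hndnat
  have e1 : ((3 :: 1 :: (range' 4 (n - 3)).reverse).map (g n hn0)).formPerm
      = ((1 :: (range' 3 (n - 2)).reverse).map (g n hn0)).formPerm := by
    rw [show ((3 :: 1 :: (range' 4 (n - 3)).reverse).map (g n hn0))
        = [3].map (g n hn0) ++ (1 :: (range' 4 (n - 3)).reverse).map (g n hn0) from by
      simp, formPerm_append_comm _ _ (by simpa using hnd), ← map_append]
    congr 2
    rw [show n - 2 = (n - 3) + 1 by omega, rev_range'_concat]
    simp
  have erev : (range' 3 (n - 2)).reverse = n :: (range' 3 (n - 3)).reverse := by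
    rw [show n - 2 = (n - 3) + 1 by omega, rev_range'_cons,
      show 3 + 1 * (n - 3) = n by omega]
  rw [hmap, e1, erev]
  simp only [map_cons]
  rw [key1]
  exact tc1 hn0 (by omega) (by omega) (by omega) (by omega) (by omega) (by omega)
    (by omega) (by omega) (by omega)


theorem o6 {n : ℕ} (hn : 4 ≤ n) :
    Perm.IsThreeCycle ((OE6 n).1 * (OE6 n).2 * (OE6 n).1⁻¹ * (OE6 n).2⁻¹) := by
  have hn0 : 0 < n := by omega
  have hbv : ∀ a ∈ (1 :: 2 :: (range' 3 (n - 2)).reverse), 1 ≤ a ∧ a ≤ n := by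
    intro a ha
    rcases mem_cons.mp ha with rfl | h
    · omega
    rcases mem_cons.mp h with rfl | h'
    · omega
    · rw [mem_reverse, mem_range'_1] at h'; omega
  have hv : (OE6 n).2 = ((1 :: 2 :: (range' 3 (n - 2)).reverse).map (g n hn0)).formPerm :=
    cyc_eq hn0 _ (fun a ha => (hbv a ha).2)
  have hh : (OE6 n).1 = ((range' 2 (n - 1)).map (g n hn0)).formPerm :=
    cyc_eq hn0 _ (fun a ha => by rw [mem_range'_1] at ha; omega)
  have h6 : ∀ a, 2 ≤ a → a ≤ n - 1 → (OE6 n).1 (g n hn0 a) = g n hn0 (a + 1) := by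
    intro a h1 h2
    rw [hh, fp_range'_apply hn0 (by omega) (by omega) (by omega) h1 (by omega)]
    congr 1
    rw [show a + 1 - 2 = a - 1 by omega, Nat.mod_eq_of_lt (by omega)]
    omega
  have h6top : (OE6 n).1 (g n hn0 n) = g n hn0 2 := by
    rw [hh, fp_range'_apply hn0 (by omega) (by omega) (by omega) (by omega) (by omega)]
    rw [show n + 1 - 2 = n - 1 by omega, Nat.mod_self]
  have h61 : (OE6 n).1 (g n hn0 1) = g n hn0 1 := by
    rw [hh]
    exact formPerm_apply_of_notMem (g_not_mem_map hn0 (by omega) (by omega)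
      (fun a ha => by rw [mem_range'_1] at ha; exact ⟨by omega, by omega, by omega⟩))
  have erev : (range' 3 (n - 2)).reverse = n :: (range' 3 (n - 3)).reverse := by
    rw [show n - 2 = (n - 3) + 1 by omega, rev_range'_cons, show 3 + 1 * (n - 3) = n by omega]
  have tail : ((range' 3 (n - 3)).reverse.map (g n hn0)).map (OE6 n).1
      = (range' 4 (n - 3)).reverse.map (g n hn0) := by
    rw [map_map, show (range' 4 (n - 3)).reverse = (range' 3 (n - 3)).reverse.map (· + 1) from
      by rw [map_reverse, map_succ_range', show (3 : ℕ) + 1 = 4 from rfl], map_map]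
    refine map_congr_left fun a ha => ?_
    rw [mem_reverse, mem_range'_1] at ha
    exact h6 a (by omega) (by omega)
  rw [comm_eq _ _ _ hv]
  have hmap : ((1 :: 2 :: (range' 3 (n - 2)).reverse).map (g n hn0)).map (OE6 n).1
      = (1 :: 3 :: 2 :: (range' 4 (n - 3)).reverse).map (g n hn0) := by
    rw [erev]
    simp only [map_cons]
    rw [h61, h6 2 le_rfl (by omega), h6top, tail]
  have hndτ : ((1 :: 2 :: (range' 3 (n - 2)).reverse).map (g n hn0)).Nodup := by
    refine nodup_gmap hn0 hbv ?_
    simp only [nodup_cons, mem_cons, mem_reverse, mem_range'_1, nodup_reverse]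
    refine ⟨?_, ?_, nodup_range' (s := 3) (n := n - 2)⟩ <;> omega
  have hndσ : ((1 :: 3 :: 2 :: (range' 4 (n - 3)).reverse).map (g n hn0)).Nodup := by
    refine nodup_gmap hn0 (fun a ha => ?_) ?_
    · simp only [mem_cons, mem_reverse, mem_range'_1] at ha
      rcases ha with rfl | rfl | rfl | h <;> omega
    · simp only [nodup_cons, mem_cons, mem_reverse, mem_range'_1, nodup_reverse]
      exact ⟨by omega, by omega, by omega, nodup_range' (s := 4) (n := n - 3)⟩
  have e1 : ((1 :: 3 :: 2 :: (range' 4 (n - 3)).reverse).map (g n hn0)).formPerm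
      = (((2 :: (range' 4 (n - 3)).reverse).map (g n hn0))
          ++ g n hn0 1 :: [g n hn0 3]).formPerm := by
    rw [show ((1 :: 3 :: 2 :: (range' 4 (n - 3)).reverse).map (g n hn0))
        = [1, 3].map (g n hn0) ++ (2 :: (range' 4 (n - 3)).reverse).map (g n hn0) from by simp,
      formPerm_append_comm _ _ (by rw [← map_append]; exact hndσ)]
    rfl
  have e2 : ((1 :: 2 :: (range' 3 (n - 2)).reverse).map (g n hn0)).formPerm
      = (((2 :: (range' 4 (n - 3)).reverse).map (g n hn0))
          ++ [g n hn0 3] ++ [g n hn0 1]).formPerm := by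
    rw [show ((1 :: 2 :: (range' 3 (n - 2)).reverse).map (g n hn0))
        = [1].map (g n hn0) ++ (2 :: (range' 3 (n - 2)).reverse).map (g n hn0) from by simp,
      formPerm_append_comm _ _ (by rw [← map_append]; exact hndτ)]
    congr 2
    rw [show n - 2 = (n - 3) + 1 by omega, rev_range'_concat]
    simp
  have hnd : (((2 :: (range' 4 (n - 3)).reverse).map (g n hn0))
      ++ g n hn0 1 :: [g n hn0 3]).Nodup :=
    (List.perm_append_comm (l₁ := [g n hn0 1, g n hn0 3])
      (l₂ := (2 :: (range' 4 (n - 3)).reverse).map (g n hn0))).nodup (by exact hndσ)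
  rw [hmap, e1, e2, keyL (g n hn0 1) _ _ (by simp) (by simp) hnd]
  simp only [map_cons, head_cons]
  exact tc2 hn0 (by omega) (by omega) (by omega) (by omega) (by omega) (by omega)
    (by omega) (by omega) (by omega)


theorem o2 {n : ℕ} (hn : 4 ≤ n) (hne : Even n) :
    Perm.IsThreeCycle ((OE2 n).1 * (OE2 n).2 * (OE2 n).1⁻¹ * (OE2 n).2⁻¹) := by
  have hn0 : 0 < n := by omega
  obtain ⟨m, hm⟩ := hne
  have hbD : ∀ a ∈ range' 3 ((n - 2) / 2) 2, 3 ≤ a ∧ a ≤ n - 1 := by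
    intro a ha
    rw [mem_range'] at ha
    obtain ⟨i, hi, rfl⟩ := ha
    omega
  have hbE : ∀ a ∈ range' 2 ((n - 2) / 2) 2, 2 ≤ a ∧ a ≤ n - 2 := by
    intro a ha
    rw [mem_range'] at ha
    obtain ⟨i, hi, rfl⟩ := ha
    omega
  have hbA : ∀ a ∈ range' 4 ((n - 2) / 2) 2, 4 ≤ a ∧ a ≤ n := by
    intro a ha
    rw [mem_range'] at ha
    obtain ⟨i, hi, rfl⟩ := ha
    omega
  have hbv : ∀ a ∈ (1 :: ((range' 3 ((n - 2) / 2) 2).reverse ++ n :: (range' 2 ((n - 2) / 2) 2).reverse)),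
      1 ≤ a ∧ a ≤ n := by
    intro a ha
    rcases mem_cons.mp ha with rfl | h
    · omega
    rcases mem_append.mp h with h | h
    · have := hbD a (mem_reverse.mp h); omega
    rcases mem_cons.mp h with rfl | h
    · omega
    · have := hbE a (mem_reverse.mp h); omega
  have hv : (OE2 n).2 = ((1 :: ((range' 3 ((n - 2) / 2) 2).reverse
      ++ n :: (range' 2 ((n - 2) / 2) 2).reverse)).map (g n hn0)).formPerm :=
    cyc_eq hn0 _ (fun a ha => (hbv a ha).2)
  have hh : (OE2 n).1 = ((range' 1 n).map (g n hn0)).formPerm :=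
    cyc_eq hn0 _ (fun a ha => by rw [mem_range'_1] at ha; omega)
  rw [comm_eq _ _ _ hv]
  have hA' : (range' 4 ((n - 2) / 2) 2).reverse = n :: (range' 4 (((n - 2) / 2) - 1) 2).reverse := by
    conv_lhs => rw [show ((n - 2) / 2) = (((n - 2) / 2) - 1) + 1 by omega]
    rw [rev_range'_cons, show 4 + 2 * (((n - 2) / 2) - 1) = n by omega]
  have hmap : ((1 :: ((range' 3 ((n - 2) / 2) 2).reverse
        ++ n :: (range' 2 ((n - 2) / 2) 2).reverse)).map (g n hn0)).map (OE2 n).1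
      = ((2 :: ((range' 4 ((n - 2) / 2) 2).reverse ++ 1 :: (range' 3 ((n - 2) / 2) 2).reverse)).map (g n hn0)) := by
    rw [hh, map_shift hn0 _ _ (fun a ha => r_apply hn0 (hbv a ha).1 (hbv a ha).2)]
    have hnat : (1 :: ((range' 3 ((n - 2) / 2) 2).reverse ++ n :: (range' 2 ((n - 2) / 2) 2).reverse)).map (· + 1)
        = 2 :: ((range' 4 ((n - 2) / 2) 2).reverse ++ (n + 1) :: (range' 3 ((n - 2) / 2) 2).reverse) := by
      simp only [map_cons, map_append, map_reverse, map_succ_range']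
    rw [hnat]
    simp [g_top hn0]
  have hbσ : ∀ a ∈ (2 :: ((range' 4 ((n - 2) / 2) 2).reverse ++ 1 :: (range' 3 ((n - 2) / 2) 2).reverse)),
      1 ≤ a ∧ a ≤ n := by
    intro a ha
    rcases mem_cons.mp ha with rfl | h
    · omega
    rcases mem_append.mp h with h | h
    · have := hbA a (mem_reverse.mp h); omega
    rcases mem_cons.mp h with rfl | h
    · omega
    · have := hbD a (mem_reverse.mp h); omega
  have hndσ : ((2 :: ((range' 4 ((n - 2) / 2) 2).reverse
      ++ 1 :: (range' 3 ((n - 2) / 2) 2).reverse)).map (g n hn0)).Nodup := by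
    refine nodup_gmap hn0 hbσ ?_
    refine nodup_cons.mpr ⟨?_, ?_⟩
    · intro h
      rcases mem_append.mp h with h | h
      · have := hbA 2 (mem_reverse.mp h); omega
      rcases mem_cons.mp h with h | h
      · omega
      · have := hbD 2 (mem_reverse.mp h); omega
    · refine (nodup_reverse.mpr (nodup_range' (s := 4) (n := (n - 2) / 2) 2 (by omega))).append ?_ ?_
      · refine nodup_cons.mpr ⟨?_, nodup_reverse.mpr (nodup_range' (s := 3) (n := (n - 2) / 2) 2 (by omega))⟩
        intro h
        have := hbD 1 (mem_reverse.mp h); omega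
      · intro a ha hb
        rw [mem_reverse, mem_range'] at ha
        obtain ⟨i, hi, rfl⟩ := ha
        rcases mem_cons.mp hb with h | h
        · omega
        · rw [mem_reverse, mem_range'] at h
          obtain ⟨j, hj, hij⟩ := h
          omega
  have hndτ : ((1 :: ((range' 3 ((n - 2) / 2) 2).reverse
      ++ n :: (range' 2 ((n - 2) / 2) 2).reverse)).map (g n hn0)).Nodup := by
    refine nodup_gmap hn0 hbv ?_
    refine nodup_cons.mpr ⟨?_, ?_⟩
    · intro h
      rcases mem_append.mp h with h | h
      · have := hbD 1 (mem_reverse.mp h); omega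
      rcases mem_cons.mp h with h | h
      · omega
      · have := hbE 1 (mem_reverse.mp h); omega
    · refine (nodup_reverse.mpr (nodup_range' (s := 3) (n := (n - 2) / 2) 2 (by omega))).append ?_ ?_
      · refine nodup_cons.mpr ⟨?_, nodup_reverse.mpr (nodup_range' (s := 2) (n := (n - 2) / 2) 2 (by omega))⟩
        intro h
        have := hbE n (mem_reverse.mp h); omega
      · intro a ha hb
        rw [mem_reverse, mem_range'] at ha
        obtain ⟨i, hi, rfl⟩ := ha
        rcases mem_cons.mp hb with h | h
        · omega
        · rw [mem_reverse, mem_range'] at h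
          obtain ⟨j, hj, hij⟩ := h
          omega
  have e1 : ((2 :: ((range' 4 ((n - 2) / 2) 2).reverse ++ 1 :: (range' 3 ((n - 2) / 2) 2).reverse)).map (g n hn0)).formPerm
      = ((((range' 4 ((n - 2) / 2) 2).reverse.map (g n hn0))
          ++ (1 :: (range' 3 ((n - 2) / 2) 2).reverse).map (g n hn0)) ++ [g n hn0 2]).formPerm := by
    rw [show ((2 :: ((range' 4 ((n - 2) / 2) 2).reverse ++ 1 :: (range' 3 ((n - 2) / 2) 2).reverse)).map (g n hn0))
        = [2].map (g n hn0)
          ++ ((range' 4 ((n - 2) / 2) 2).reverse ++ 1 :: (range' 3 ((n - 2) / 2) 2).reverse).map (g n hn0) from by simp,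
      formPerm_append_comm _ _ (by rw [← map_append]; exact hndσ), map_append]
    rfl
  have hnE : (n :: (range' 2 ((n - 2) / 2) 2).reverse) = (range' 4 ((n - 2) / 2) 2).reverse ++ [2] := by
    have h1 := rev_range'_cons 2 ((n - 2) / 2) 2
    have h2 := rev_range'_concat 2 ((n - 2) / 2) 2
    rw [show (2 : ℕ) + 2 = 4 from rfl] at h2
    rw [show 2 + 2 * ((n - 2) / 2) = n by omega] at h1
    rw [← h1, h2]
  have e2 : ((1 :: ((range' 3 ((n - 2) / 2) 2).reverse
        ++ n :: (range' 2 ((n - 2) / 2) 2).reverse)).map (g n hn0)).formPerm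
      = (((range' 4 ((n - 2) / 2) 2).reverse.map (g n hn0))
          ++ g n hn0 2 :: (1 :: (range' 3 ((n - 2) / 2) 2).reverse).map (g n hn0)).formPerm := by
    rw [show ((1 :: ((range' 3 ((n - 2) / 2) 2).reverse ++ n :: (range' 2 ((n - 2) / 2) 2).reverse)).map (g n hn0))
        = (1 :: (range' 3 ((n - 2) / 2) 2).reverse).map (g n hn0)
          ++ (n :: (range' 2 ((n - 2) / 2) 2).reverse).map (g n hn0) from by simp,
      formPerm_append_comm _ _ (by rw [← map_append]; exact hndτ), hnE, map_append,
      append_assoc]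
    rfl
  have hndk : (((range' 4 ((n - 2) / 2) 2).reverse.map (g n hn0))
      ++ g n hn0 2 :: (1 :: (range' 3 ((n - 2) / 2) 2).reverse).map (g n hn0)).Nodup := by
    refine (List.perm_middle.symm).nodup ?_
    rw [← map_append]
    exact hndσ
  rw [hA'] at hmap e1 e2 hndk
  rw [hmap, e1, e2, keyL' (g n hn0 2) _ _ (by simp) (by simp) hndk]
  simp only [map_cons, head_cons]
  exact tc2 hn0 (by omega) (by omega) (by omega) (by omega) (by omega) (by omega)
    (by omega) (by omega) (by omega)

end OgA

theorem stmt0 (n : ℕ) (hn : 4 ≤ n) (hne : Even n) :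
    ∀ O ∈ [OE1 n, OE2 n, OE3 n, OE4 n, OE5 n, OE6 n],
      Equiv.Perm.IsThreeCycle (O.1 * O.2 * O.1⁻¹ * O.2⁻¹) := by
  intro O hO
  simp only [List.mem_cons, List.not_mem_nil, or_false] at hO
  rcases hO with rfl | rfl | rfl | rfl | rfl | rfl
  · exact OgA.o1 hn
  · exact OgA.o2 hn hne
  · exact OgA.o3 hn
  · exact OgA.o4 hn
  · exact OgA.o5 hn
  · exact OgA.o6 hn
end

section
/- For every n ≥ 4, with O₁ = ((n-1,n),(1,2,…,n-1)), O₄ = ((1,2,…,n),(2,3,…,n)), and O₅ = ((1,2,…,n),(2,n,n-1,…,3)), one has S⁻¹(O₁) ≃ O₄ and S(O₁) ≃ O₅, where ≃ denotes equivalence by simultaneous conjugation. -/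
open Equiv

section Aux
variable {n : ℕ}

lemma filterMap_cyc (hn : 0 < n) (l : List ℕ) (hl : ∀ a ∈ l, a - 1 < n) :
    (l.filterMap fun a => if h : a - 1 < n then some (⟨a - 1, h⟩ : Fin n) else none)
      = l.map (fun a => (⟨(a - 1) % n, Nat.mod_lt _ hn⟩ : Fin n)) := by
  induction l with
  | nil => rfl
  | cons a l ih =>
    have ha : a - 1 < n := hl a List.mem_cons_self
    rw [List.filterMap_cons, List.map_cons, dif_pos ha,
      ih (fun b hb => hl b (List.mem_cons_of_mem _ hb))]
    simp [Fin.ext_iff, Nat.mod_eq_of_lt ha]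

lemma formPerm_ofFn_apply {k : ℕ} (hk : 0 < k) (g : Fin k → Fin n)
    (hg : Function.Injective g) (i : Fin k) :
    (List.ofFn g).formPerm (g i) = g ⟨(i.val + 1) % k, Nat.mod_lt _ hk⟩ := by
  have h1 : g i = (List.ofFn g)[i.val]'(by simp) := by simp
  rw [h1, List.formPerm_apply_getElem _ ((List.nodup_ofFn).mpr hg)]
  simp

lemma formPerm_ofFn_apply_of_ne {k : ℕ} (g : Fin k → Fin n) (x : Fin n)
    (hx : ∀ i, g i ≠ x) :
    (List.ofFn g).formPerm x = x :=
  List.formPerm_apply_of_notMem (by simpa [List.mem_ofFn] using fun i => hx i)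

lemma cyc_range' (s k : ℕ) (hs : 1 ≤ s) (hk : s - 1 + k ≤ n) (hn : 0 < n) :
    cyc n (List.range' s k)
      = (List.ofFn fun i : Fin k => (⟨s - 1 + i.val, by omega⟩ : Fin n)).formPerm := by
  unfold cyc
  rw [filterMap_cyc hn _ (fun a ha => by rw [List.mem_range'_1] at ha; omega)]
  congr 1
  refine List.ext_getElem (by simp) ?_
  intro i h1 h2
  simp only [List.getElem_map, List.getElem_range', List.getElem_ofFn]
  simp only [List.length_map, List.length_range'] at h1
  simp only [Fin.mk.injEq]
  rw [Nat.mod_eq_of_lt (by omega)]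
  omega

lemma cyc_range'_apply (s k : ℕ) (hs : 1 ≤ s) (hk : s - 1 + k ≤ n) (hkpos : 0 < k)
    (x : Fin n) :
    ((cyc n (List.range' s k)) x).val =
      if s - 1 ≤ x.val ∧ x.val < s - 1 + k then s - 1 + (x.val - (s - 1) + 1) % k
      else x.val := by
  rw [cyc_range' s k hs hk (by omega)]
  set g : Fin k → Fin n := fun i => ⟨s - 1 + i.val, by omega⟩ with hgdef
  have hg : Function.Injective g := fun i j hij => Fin.ext (by
    have := congrArg Fin.val hij
    simp only [hgdef] at this
    omega)
  by_cases hx : s - 1 ≤ x.val ∧ x.val < s - 1 + k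
  · have hxe : x = g ⟨x.val - (s - 1), by omega⟩ := Fin.ext (by simp [hgdef]; omega)
    rw [if_pos hx]
    conv_lhs => rw [hxe]
    rw [formPerm_ofFn_apply hkpos g hg]
  · rw [if_neg hx, formPerm_ofFn_apply_of_ne g x]
    intro i hi
    have := congrArg Fin.val hi
    simp only [hgdef] at this
    have := i.isLt
    omega

lemma c_apply (hn : 4 ≤ n) (x : Fin n) :
    ((cyc n (List.range' 1 n)) x).val = if x.val = n - 1 then 0 else x.val + 1 := by
  have hxlt := x.isLt
  rw [cyc_range'_apply 1 n le_rfl (by omega) (by omega)]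
  by_cases h1 : x.val = n - 1
  · rw [if_pos h1, if_pos (by omega)]
    have e : x.val - (1 - 1) + 1 = n := by omega
    rw [e, Nat.mod_self]
  · rw [if_neg h1, if_pos (by omega), Nat.mod_eq_of_lt (by omega)]
    omega

lemma v_apply (hn : 4 ≤ n) (x : Fin n) :
    ((cyc n (List.range' 1 (n - 1))) x).val =
      if x.val = n - 2 then 0 else if x.val = n - 1 then x.val else x.val + 1 := by
  have hxlt := x.isLt
  rw [cyc_range'_apply 1 (n - 1) le_rfl (by omega) (by omega)]
  by_cases h1 : x.val = n - 2
  · rw [if_pos h1, if_pos (by omega)]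
    have e : x.val - (1 - 1) + 1 = n - 1 := by omega
    rw [e, Nat.mod_self]
  · rw [if_neg h1]
    by_cases h2 : x.val = n - 1
    · rw [if_pos h2, if_neg (by omega)]
    · rw [if_neg h2, if_pos (by omega), Nat.mod_eq_of_lt (by omega)]
      omega

lemma o42_apply (hn : 4 ≤ n) (x : Fin n) :
    ((cyc n (List.range' 2 (n - 1))) x).val =
      if x.val = 0 then 0 else if x.val = n - 1 then 1 else x.val + 1 := by
  have hxlt := x.isLt
  rw [cyc_range'_apply 2 (n - 1) (by omega) (by omega) (by omega)]
  by_cases h1 : x.val = 0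
  · rw [if_pos h1, if_neg (by omega)]
    omega
  · rw [if_neg h1]
    by_cases h2 : x.val = n - 1
    · rw [if_pos h2, if_pos (by omega)]
      have e : x.val - (2 - 1) + 1 = n - 1 := by omega
      rw [e, Nat.mod_self]
    · rw [if_neg h2, if_pos (by omega), Nat.mod_eq_of_lt (by omega)]
      omega

lemma h_apply (hn : 4 ≤ n) (x : Fin n) :
    ((cyc n [n - 1, n]) x).val =
      if x.val = n - 2 then n - 1 else if x.val = n - 1 then n - 2 else x.val := by
  have hxlt := x.isLt
  unfold cyc
  rw [List.filterMap_cons, List.filterMap_cons, List.filterMap_nil,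
    dif_pos (show n - 1 - 1 < n by omega), dif_pos (show n - 1 < n by omega),
    List.formPerm_pair, Equiv.swap_apply_def]
  by_cases ha : x = (⟨n - 1 - 1, by omega⟩ : Fin n)
  · have hav : x.val = n - 2 := by rw [ha]; show n - 1 - 1 = n - 2; omega
    rw [if_pos ha, if_pos hav]
  · have hav : ¬ x.val = n - 2 := fun hv => ha (Fin.ext (show x.val = n - 1 - 1 by omega))
    rw [if_neg ha, if_neg hav]
    by_cases hb : x = (⟨n - 1, by omega⟩ : Fin n)
    · have hbv : x.val = n - 1 := by rw [hb]
      rw [if_pos hb, if_pos hbv]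
      show n - 1 - 1 = n - 2
      omega
    · have hbv : ¬ x.val = n - 1 := fun hv => hb (Fin.ext hv)
      rw [if_neg hb, if_neg hbv]

lemma cyc_O52 (hn : 4 ≤ n) :
    cyc n (2 :: (List.range' 3 (n - 2)).reverse)
      = (List.ofFn fun i : Fin (n - 1) =>
          (⟨if i.val = 0 then 1 else n - i.val, by split <;> omega⟩ : Fin n)).formPerm := by
  unfold cyc
  rw [filterMap_cyc (by omega) _ (fun a ha => by
    simp only [List.mem_cons, List.mem_reverse, List.mem_range'_1] at ha
    omega)]
  congr 1
  refine List.ext_getElem (by simp; omega) ?_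
  intro i h1 h2
  simp only [List.length_map, List.length_cons, List.length_reverse, List.length_range'] at h1
  match i with
  | 0 =>
    simp only [List.getElem_map, List.getElem_cons_zero, List.getElem_ofFn]
    simp [Fin.ext_iff, Nat.mod_eq_of_lt (show (1 : ℕ) < n by omega)]
  | (j + 1) =>
    simp only [List.getElem_map, List.getElem_cons_succ, List.getElem_reverse,
      List.getElem_range', List.getElem_ofFn, List.length_reverse, List.length_range']
    simp only [Fin.ext_iff]
    rw [Nat.mod_eq_of_lt (by omega)]
    rw [if_neg (by omega)]
    omega

lemma o52_apply (hn : 4 ≤ n) (x : Fin n) :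
    ((cyc n (2 :: (List.range' 3 (n - 2)).reverse)) x).val =
      if x.val = 0 then 0
      else if x.val = 1 then n - 1
      else if x.val = 2 then 1 else x.val - 1 := by
  have hxlt := x.isLt
  rw [cyc_O52 hn]
  set g : Fin (n - 1) → Fin n :=
    fun i => ⟨if i.val = 0 then 1 else n - i.val, by split <;> omega⟩ with hgdef
  have hg : Function.Injective g := fun i j hij => Fin.ext (by
    have := congrArg Fin.val hij
    have hi := i.isLt
    have hj := j.isLt
    simp only [hgdef] at this
    split_ifs at this <;> omega)
  by_cases h0 : x.val = 0
  · rw [if_pos h0, formPerm_ofFn_apply_of_ne g x (fun i hi => by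
      have := congrArg Fin.val hi
      have hilt := i.isLt
      simp only [hgdef] at this
      split_ifs at this <;> omega)]
    exact h0
  · rw [if_neg h0]
    by_cases h1 : x.val = 1
    · rw [if_pos h1]
      have hxe : x = g ⟨0, by omega⟩ := Fin.ext (by simp [hgdef]; omega)
      conv_lhs => rw [hxe]
      rw [formPerm_ofFn_apply (by omega) g hg]
      simp only [hgdef]
      rw [Nat.mod_eq_of_lt (by omega)]
      simp
    · rw [if_neg h1]
      have hxe : x = g ⟨n - x.val, by omega⟩ := Fin.ext (by
        simp only [hgdef]
        rw [if_neg (by omega)]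
        omega)
      conv_lhs => rw [hxe]
      rw [formPerm_ofFn_apply (by omega) g hg]
      by_cases h2 : x.val = 2
      · rw [if_pos h2]
        simp only [hgdef]
        have e : n - x.val + 1 = n - 1 := by omega
        rw [e, Nat.mod_self]
        simp
      · rw [if_neg h2]
        simp only [hgdef]
        rw [Nat.mod_eq_of_lt (by omega), if_neg (by omega)]
        omega

lemma g1_apply (hn : 4 ≤ n) (x : Fin n) :
    ((Equiv.swap (⟨0, by omega⟩ : Fin n) ⟨1, by omega⟩)
        ((cyc n (List.range' 1 n)) ((cyc n (List.range' 1 n)) x))).val =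
      if x.val = n - 2 then 1 else if x.val = n - 1 then 0 else x.val + 2 := by
  have hxlt := x.isLt
  by_cases h1 : x.val = n - 2
  · have e1 : ((cyc n (List.range' 1 n)) x).val = n - 1 := by
      rw [c_apply hn, if_neg (by omega)]; omega
    have e2 : (cyc n (List.range' 1 n)) ((cyc n (List.range' 1 n)) x)
        = (⟨0, by omega⟩ : Fin n) := Fin.ext (by rw [c_apply hn, if_pos e1])
    rw [if_pos h1, e2, Equiv.swap_apply_left]
  · rw [if_neg h1]
    by_cases h2 : x.val = n - 1
    · have e1 : ((cyc n (List.range' 1 n)) x).val = 0 := by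
        rw [c_apply hn, if_pos h2]
      have e2 : (cyc n (List.range' 1 n)) ((cyc n (List.range' 1 n)) x)
          = (⟨1, by omega⟩ : Fin n) := Fin.ext (by
        rw [c_apply hn, if_neg (by omega)]
        show _ = 1
        omega)
      rw [if_pos h2, e2, Equiv.swap_apply_right]
    · have e1 : ((cyc n (List.range' 1 n)) x).val = x.val + 1 := by
        rw [c_apply hn, if_neg h2]
      have e2 : ((cyc n (List.range' 1 n)) ((cyc n (List.range' 1 n)) x)).val
          = x.val + 2 := by
        rw [c_apply hn, if_neg (by omega)]; omega
      rw [if_neg h2, Equiv.swap_apply_of_ne_of_ne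
        (by simp [Fin.ext_iff]; omega) (by simp [Fin.ext_iff]; omega)]
      exact e2

end Aux

theorem stmt3 (n : ℕ) (hn : 4 ≤ n) :
    OrigamiEquiv (SinvAct (OE1 n)) (OE4 n) ∧ OrigamiEquiv (Sact (OE1 n)) (OE5 n) := by
  constructor
  · refine ⟨Equiv.swap (⟨0, by omega⟩ : Fin n) ⟨1, by omega⟩
      * (cyc n (List.range' 1 n) * cyc n (List.range' 1 n)), ?_, ?_⟩
    · show _ * ((OE1 n).1 * (OE1 n).2) * _ = _
      simp only [OE1, OE4]
      rw [mul_inv_eq_iff_eq_mul]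
      refine Equiv.ext fun x => Fin.ext ?_
      have hxlt := x.isLt
      simp only [Perm.mul_apply]
      simp only [g1_apply hn, h_apply hn, v_apply hn, c_apply hn]
      split_ifs <;> (try exact (‹False›).elim) <;> omega
    · show _ * (OE1 n).2 * _ = _
      simp only [OE1, OE4]
      rw [mul_inv_eq_iff_eq_mul]
      refine Equiv.ext fun x => Fin.ext ?_
      have hxlt := x.isLt
      simp only [Perm.mul_apply]
      simp only [g1_apply hn, v_apply hn, o42_apply hn]
      split_ifs <;> (try exact (‹False›).elim) <;> omega
  · refine ⟨Fin.revPerm, ?_, ?_⟩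
    · show _ * ((OE1 n).1 * (OE1 n).2⁻¹) * _ = _
      simp only [OE1, OE5]
      rw [mul_inv_eq_iff_eq_mul, ← mul_assoc, mul_inv_eq_iff_eq_mul]
      refine Equiv.ext fun x => Fin.ext ?_
      have hxlt := x.isLt
      simp only [Perm.mul_apply]
      simp only [Fin.revPerm_apply, Fin.val_rev, h_apply hn, v_apply hn, c_apply hn]
      split_ifs <;> (try exact (‹False›).elim) <;> omega
    · show _ * (OE1 n).2 * _ = _
      simp only [OE1, OE5]
      rw [mul_inv_eq_iff_eq_mul]
      refine Equiv.ext fun x => Fin.ext ?_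
      have hxlt := x.isLt
      simp only [Perm.mul_apply]
      simp only [Fin.revPerm_apply, Fin.val_rev, v_apply hn, o52_apply hn]
      split_ifs <;> (try exact (‹False›).elim) <;> omega
end

section
/- For every n ≥ 4, with O₃ = ((1,2,…,n),(n-1,n)), O'' = ((2,3,…,n),(1,2)), and O₆ = ((2,3,…,n),(1,2,n,n-1,…,3)), one has S(O₃) ≃ O'' and T(O'') ≃ O₆, where ≃ denotes equivalence by simultaneous conjugation. -/
open Equiv

/-- `O'' = ((2,3,...,n), (1,2))` -/
def Odoubleprime (n : ℕ) : Equiv.Perm (Fin n) × Equiv.Perm (Fin n) :=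
  (cyc n (List.range' 2 (n - 1)), cyc n [1, 2])

namespace Stmt5Aux

open List

/-- The map `a ↦ a - 1` into `Fin (m+4)`. -/
def gg (m : ℕ) (a : ℕ) : Fin (m + 4) := ⟨(a - 1) % (m + 4), Nat.mod_lt _ (by omega)⟩

lemma gg_eq {m : ℕ} (a j : ℕ) (h : j < m + 4) (ha : a - 1 = j) : gg m a = ⟨j, h⟩ :=
  Fin.ext (by simp [gg, ha, Nat.mod_eq_of_lt h])

lemma filt {m : ℕ} (l : List ℕ) (hl : ∀ a ∈ l, a - 1 < m + 4) :
    (l.filterMap fun a => if h : a - 1 < m + 4 then some (⟨a - 1, h⟩ : Fin (m + 4)) else none)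
      = l.map (gg m) := by
  induction l with
  | nil => simp
  | cons a t ih =>
    have ha : a - 1 < m + 4 := hl a List.mem_cons_self
    have hsome : (if h : a - 1 < m + 4 then some (⟨a - 1, h⟩ : Fin (m + 4)) else none)
        = some (gg m a) := by
      rw [dif_pos ha]
      exact congrArg some (gg_eq a (a - 1) ha rfl).symm
    simp only [List.filterMap_cons, hsome, List.map_cons]
    rw [ih fun b hb => hl b (List.mem_cons_of_mem _ hb)]

lemma nodup_map_gg (m s k : ℕ) (hs : 1 ≤ s) (hk : s + k ≤ m + 5) :
    ((List.range' s k).map (gg m)).Nodup := by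
  refine List.Nodup.map_on ?_ List.nodup_range'
  intro x hx y hy hxy
  rw [List.mem_range'_1] at hx hy
  have h := congrArg Fin.val hxy
  simp only [gg] at h
  rw [Nat.mod_eq_of_lt (by omega), Nat.mod_eq_of_lt (by omega)] at h
  omega

lemma r_apply (m i : ℕ) (hi : i < m + 4) :
    ((List.range' 1 (m + 4)).map (gg m)).formPerm ⟨i, hi⟩
      = ⟨(i + 1) % (m + 4), Nat.mod_lt _ (by omega)⟩ := by
  have hlen : ((List.range' 1 (m + 4)).map (gg m)).length = m + 4 := by simp
  have hnd := nodup_map_gg m 1 (m + 4) le_rfl (by omega)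
  have h1 : ((List.range' 1 (m + 4)).map (gg m))[i]'(by omega) = ⟨i, hi⟩ := by
    rw [List.getElem_map, List.getElem_range'_1]
    exact gg_eq _ i hi (by omega)
  have := List.formPerm_apply_getElem _ hnd i (by omega)
  rw [h1] at this
  rw [this]
  have h2 : (i + 1) % ((List.range' 1 (m + 4)).map (gg m)).length = (i + 1) % (m + 4) := by
    rw [hlen]
  simp only [List.getElem_map, List.getElem_range'_1, hlen]
  exact gg_eq _ _ _ (by omega)

lemma rK (m : ℕ) : cyc (m + 4) (List.range' 1 (m + 4))
    = ((List.range' 1 (m + 4)).map (gg m)).formPerm := by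
  unfold cyc
  rw [filt]
  intro a ha
  rw [List.mem_range'_1] at ha
  omega

lemma K1 (m : ℕ) : cyc (m + 4) [m + 4 - 1, m + 4]
    = Equiv.swap (⟨m + 2, by omega⟩ : Fin (m + 4)) ⟨m + 3, by omega⟩ := by
  unfold cyc
  rw [filt _ (by intro a ha; simp at ha; omega)]
  simp only [List.map_cons, List.map_nil]
  rw [List.formPerm_pair]
  rw [gg_eq (m + 4 - 1) (m + 2) (by omega) (by omega),
    gg_eq (m + 4) (m + 3) (by omega) (by omega)]

lemma K2 (m : ℕ) : cyc (m + 4) [1, 2]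
    = Equiv.swap (⟨0, by omega⟩ : Fin (m + 4)) ⟨1, by omega⟩ := by
  unfold cyc
  rw [filt _ (by intro a ha; simp at ha; omega)]
  simp only [List.map_cons, List.map_nil]
  rw [List.formPerm_pair]
  rw [gg_eq 1 0 (by omega) (by omega), gg_eq 2 1 (by omega) (by omega)]

lemma range'_split (m : ℕ) :
    List.range' 1 (m + 4) = 1 :: List.range' 2 (m + 3) := by
  rw [show m + 4 = (m + 3) + 1 from rfl, List.range'_succ]

lemma range'_split2 (m : ℕ) :
    List.range' 2 (m + 3) = 2 :: List.range' 3 (m + 2) := by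
  rw [show m + 3 = (m + 2) + 1 from rfl, List.range'_succ]

lemma K3 (m : ℕ) : cyc (m + 4) (List.range' 2 (m + 3))
    = Equiv.swap (⟨0, by omega⟩ : Fin (m + 4)) ⟨1, by omega⟩
        * cyc (m + 4) (List.range' 1 (m + 4)) := by
  rw [rK]
  unfold cyc
  rw [filt _ (by intro a ha; rw [List.mem_range'_1] at ha; omega)]
  rw [range'_split, range'_split2]
  simp only [List.map_cons]
  rw [List.formPerm_cons_cons, gg_eq 1 0 (by omega) (by omega),
    gg_eq 2 1 (by omega) (by omega), ← mul_assoc, Equiv.swap_mul_self, one_mul]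

lemma K4 (m : ℕ) : cyc (m + 4) (1 :: 2 :: (List.range' 3 (m + 2)).reverse)
    = Equiv.swap (⟨0, by omega⟩ : Fin (m + 4)) ⟨1, by omega⟩
        * (cyc (m + 4) (List.range' 2 (m + 3)))⁻¹ := by
  unfold cyc
  rw [filt _ (by
    intro a ha
    simp only [List.mem_cons, List.mem_reverse, List.mem_range'_1] at ha
    omega)]
  rw [filt _ (by intro a ha; rw [List.mem_range'_1] at ha; omega)]
  rw [List.map_cons, List.map_cons, List.map_reverse, List.formPerm_cons_cons]
  have hrot : ((List.range' 3 (m + 2)).map (gg m) ++ [gg m 2])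
      ~r (gg m 2 :: (List.range' 3 (m + 2)).map (gg m)) :=
    List.isRotated_concat _ _
  have hc : gg m 2 :: (List.range' 3 (m + 2)).map (gg m)
      = (List.range' 2 (m + 3)).map (gg m) := by
    rw [range'_split2, List.map_cons]
  have hnd : ((List.range' 3 (m + 2)).map (gg m) ++ [gg m 2]).Nodup := by
    rw [hrot.nodup_iff, hc]
    exact nodup_map_gg m 2 (m + 3) (by omega) (by omega)
  have h2 : gg m 2 :: ((List.range' 3 (m + 2)).map (gg m)).reverse
      = ((List.range' 3 (m + 2)).map (gg m) ++ [gg m 2]).reverse :=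
    List.reverse_concat.symm
  rw [h2, List.formPerm_reverse, List.formPerm_eq_of_isRotated hnd hrot, hc,
    gg_eq 1 0 (by omega) (by omega), gg_eq 2 1 (by omega) (by omega)]

lemma conj_lemma {G : Type*} [Group G] (s r w : G)
    (E2 : (s * r * r) * w * (s * r * r)⁻¹ = s) :
    (s * r * r) * (r * w) * (s * r * r)⁻¹ = s * r := by
  have h : (s * r * r) * (r * w) * (s * r * r)⁻¹
      = ((s * r * r) * r * (s * r * r)⁻¹) * ((s * r * r) * w * (s * r * r)⁻¹) := by
    simp [mul_assoc]
  rw [h, E2]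
  simp [mul_assoc, mul_inv_rev]

lemma E2gen {α : Type*} [DecidableEq α] (r : Equiv.Perm α) (a b c d : α)
    (h1 : r c = d) (h2 : r d = a) (h3 : r a = b) :
    (Equiv.swap a b * r * r) * Equiv.swap c d * (Equiv.swap a b * r * r)⁻¹
      = Equiv.swap a b := by
  rw [← Equiv.swap_apply_apply]
  have a1 : (Equiv.swap a b * r * r) c = b := by
    simp only [Equiv.Perm.mul_apply, h1, h2, Equiv.swap_apply_left]
  have a2 : (Equiv.swap a b * r * r) d = a := by
    simp only [Equiv.Perm.mul_apply, h2, h3, Equiv.swap_apply_right]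
  rw [a1, a2, Equiv.swap_comm]

lemma E1gen {α : Type*} [DecidableEq α] (r : Equiv.Perm α) (a b c d : α)
    (h1 : r c = d) (h2 : r d = a) (h3 : r a = b) :
    (Equiv.swap a b * r * r) * (r * (Equiv.swap c d)⁻¹) * (Equiv.swap a b * r * r)⁻¹
      = Equiv.swap a b * r := by
  rw [Equiv.swap_inv]
  exact conj_lemma _ _ _ (E2gen r a b c d h1 h2 h3)

end Stmt5Aux

open Stmt5Aux in
theorem stmt5 (n : ℕ) (hn : 4 ≤ n) :
    OrigamiEquiv (Sact (OE3 n)) (Odoubleprime n) ∧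
      OrigamiEquiv (Tact (Odoubleprime n)) (OE6 n) := by
  obtain ⟨m, rfl⟩ : ∃ m, n = m + 4 := ⟨n - 4, by omega⟩
  have hrv : ∀ i : ℕ, ∀ hi : i < m + 4,
      cyc (m + 4) (List.range' 1 (m + 4)) ⟨i, hi⟩
        = ⟨(i + 1) % (m + 4), Nat.mod_lt _ (by omega)⟩ := by
    intro i hi
    rw [rK]
    exact r_apply m i hi
  have rv0 : cyc (m + 4) (List.range' 1 (m + 4)) ⟨0, by omega⟩ = ⟨1, by omega⟩ :=
    (hrv 0 (by omega)).trans (Fin.ext (Nat.mod_eq_of_lt (by omega)))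
  have rv2 : cyc (m + 4) (List.range' 1 (m + 4)) ⟨m + 2, by omega⟩ = ⟨m + 3, by omega⟩ :=
    (hrv (m + 2) (by omega)).trans (Fin.ext (Nat.mod_eq_of_lt (by omega)))
  have rv3 : cyc (m + 4) (List.range' 1 (m + 4)) ⟨m + 3, by omega⟩ = ⟨0, by omega⟩ :=
    (hrv (m + 3) (by omega)).trans (Fin.ext (Nat.mod_self _))
  have hg1 := E1gen (cyc (m + 4) (List.range' 1 (m + 4)))
    ⟨0, by omega⟩ ⟨1, by omega⟩ ⟨m + 2, by omega⟩ ⟨m + 3, by omega⟩ rv2 rv3 rv0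
  have hg2 := E2gen (cyc (m + 4) (List.range' 1 (m + 4)))
    ⟨0, by omega⟩ ⟨1, by omega⟩ ⟨m + 2, by omega⟩ ⟨m + 3, by omega⟩ rv2 rv3 rv0
  constructor
  · -- S(O₃) ≃ O''
    refine ⟨Equiv.swap (⟨0, by omega⟩ : Fin (m + 4)) ⟨1, by omega⟩
        * cyc (m + 4) (List.range' 1 (m + 4)) * cyc (m + 4) (List.range' 1 (m + 4)),
      ?_, ?_⟩
    · exact (congrArg (fun y : Equiv.Perm (Fin (m + 4)) =>
          (Equiv.swap (⟨0, by omega⟩ : Fin (m + 4)) ⟨1, by omega⟩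
            * cyc (m + 4) (List.range' 1 (m + 4)) * cyc (m + 4) (List.range' 1 (m + 4)))
          * (cyc (m + 4) (List.range' 1 (m + 4)) * y⁻¹)
          * (Equiv.swap (⟨0, by omega⟩ : Fin (m + 4)) ⟨1, by omega⟩
            * cyc (m + 4) (List.range' 1 (m + 4)) * cyc (m + 4) (List.range' 1 (m + 4)))⁻¹)
        (K1 m)).trans (hg1.trans (K3 m).symm)
    · exact (congrArg (fun y : Equiv.Perm (Fin (m + 4)) =>
          (Equiv.swap (⟨0, by omega⟩ : Fin (m + 4)) ⟨1, by omega⟩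
            * cyc (m + 4) (List.range' 1 (m + 4)) * cyc (m + 4) (List.range' 1 (m + 4)))
          * y
          * (Equiv.swap (⟨0, by omega⟩ : Fin (m + 4)) ⟨1, by omega⟩
            * cyc (m + 4) (List.range' 1 (m + 4)) * cyc (m + 4) (List.range' 1 (m + 4)))⁻¹)
        (K1 m)).trans (hg2.trans (K2 m).symm)
  · -- T(O'') = O₆
    refine ⟨1, ?_, ?_⟩
    · simp only [Tact, Odoubleprime, OE6, one_mul, inv_one, mul_one]
    · have h := (congrArg
          (fun y : Equiv.Perm (Fin (m + 4)) =>
            y * (cyc (m + 4) (List.range' 2 (m + 3)))⁻¹) (K2 m)).trans (K4 m).symm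
      simpa only [Tact, Odoubleprime, OE6, one_mul, inv_one, mul_one,
        show m + 4 - 1 = m + 3 by omega, show m + 4 - 2 = m + 2 by omega] using h
end

section
/- Let n ≥ 4 be even, and let O₂ = ((1,2,…,n),(1,n-1,n-3,…,3,n,n-2,…,2)), O₄ = ((1,2,…,n),(2,3,…,n)), and O₅ = ((1,2,…,n),(2,n,n-1,…,3)). Then T(O₅) ≃ O₂ and T^{n-3}(O₂) ≃ O₄, where ≃ denotes equivalence by simultaneous conjugation. -/
open Equiv

namespace Stmt7Aux

variable {n : ℕ}

def toF (n : ℕ) (l : List ℕ) (hl : ∀ a ∈ l, a - 1 < n) : List (Fin n) :=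
  l.pmap (fun a h => ⟨a - 1, h⟩) hl

lemma filtered_eq : ∀ (l : List ℕ) (hl : ∀ a ∈ l, a - 1 < n),
    (l.filterMap fun a => if h : a - 1 < n then some (⟨a - 1, h⟩ : Fin n) else none)
      = toF n l hl
  | [], _ => rfl
  | a :: t, hl => by
    simp only [toF, List.filterMap_cons, dif_pos (hl a List.mem_cons_self), List.pmap]
    exact congrArg _ (filtered_eq t fun b hb => hl b (List.mem_cons_of_mem a hb))

lemma toF_length (l : List ℕ) (hl : ∀ a ∈ l, a - 1 < n) :
    (toF n l hl).length = l.length := List.length_pmap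

lemma toF_nodup (l : List ℕ) (hl : ∀ a ∈ l, a - 1 < n) (h1 : ∀ a ∈ l, 1 ≤ a)
    (hnd : l.Nodup) : (toF n l hl).Nodup := by
  have hmap : List.map Fin.val (toF n l hl) = l.map (· - 1) := by
    rw [toF, List.map_pmap]
    exact List.pmap_eq_map _
  have h2 : (l.map (· - 1)).Nodup := hnd.map_on (by
    intro x hx y hy hxy
    have := h1 x hx; have := h1 y hy
    omega)
  exact List.Nodup.of_map Fin.val (hmap ▸ h2)

lemma cyc_eq (l : List ℕ) (hl : ∀ a ∈ l, a - 1 < n) :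
    cyc n l = (toF n l hl).formPerm := by rw [cyc, filtered_eq l hl]

lemma cyc_fix (l : List ℕ) (hl : ∀ a ∈ l, a - 1 < n) (h1 : ∀ a ∈ l, 1 ≤ a)
    {v : ℕ} (hv : v < n) (hvm : v + 1 ∉ l) : cyc n l ⟨v, hv⟩ = ⟨v, hv⟩ := by
  rw [cyc_eq l hl]
  apply List.formPerm_apply_of_notMem
  rw [toF, List.mem_pmap]
  rintro ⟨a, ha, hav⟩
  have h1a := h1 a ha
  have hval : a - 1 = v := congrArg Fin.val hav
  have : a = v + 1 := by omega
  exact hvm (this ▸ ha)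

lemma cyc_mk (l : List ℕ) (hl : ∀ a ∈ l, a - 1 < n) (h1 : ∀ a ∈ l, 1 ≤ a)
    (hnd : l.Nodup) (i i' : ℕ) (hil : i < l.length) (hi' : i' < l.length)
    (hmod : (i + 1) % l.length = i') {v w : ℕ} (hv : v < n) (hw : w < n)
    (hvi : l[i]'hil - 1 = v) (hwi : l[i']'hi' - 1 = w) :
    cyc n l ⟨v, hv⟩ = ⟨w, hw⟩ := by
  subst hmod
  rw [cyc_eq l hl]
  have hL : (toF n l hl).length = l.length := List.length_pmap
  have e1 : (⟨v, hv⟩ : Fin n) = (toF n l hl)[i]'(by omega) := by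
    apply Fin.ext
    simp only [toF, List.getElem_pmap]
    exact hvi.symm
  rw [e1, List.formPerm_apply_getElem _ (toF_nodup l hl h1 hnd) i (by omega)]
  simp only [toF_length]
  apply Fin.ext
  simp only [toF, List.getElem_pmap, List.length_pmap]
  exact hwi


/-! ### getElem formulas for the concrete lists -/

lemma lh_getElem (j : ℕ) (hj : j < (List.range' 1 n).length) :
    (List.range' 1 n)[j] = 1 + j := by
  rw [List.getElem_range']; omega

lemma l4_getElem (j : ℕ) (hj : j < (List.range' 2 (n - 1)).length) :
    (List.range' 2 (n - 1))[j] = 2 + j := by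
  rw [List.getElem_range']; omega

lemma l5_length (hn : 4 ≤ n) :
    (2 :: (List.range' 3 (n - 2)).reverse).length = n - 1 := by
  simp only [List.length_cons, List.length_reverse, List.length_range']
  omega

lemma l5_getElem (hn : 4 ≤ n) (j : ℕ)
    (hj : j < (2 :: (List.range' 3 (n - 2)).reverse).length) :
    (2 :: (List.range' 3 (n - 2)).reverse)[j] = if j = 0 then 2 else n + 1 - j := by
  rw [l5_length hn] at hj
  match j with
  | 0 => simp
  | (j' + 1) =>
    rw [List.getElem_cons_succ, List.getElem_reverse, List.getElem_range']
    simp only [List.length_range']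
    rw [if_neg (by omega)]
    omega

lemma l2_length (hn : 4 ≤ n) (hne : Even n) :
    (1 :: ((List.range' 3 ((n - 2) / 2) 2).reverse ++
      n :: (List.range' 2 ((n - 2) / 2) 2).reverse)).length = n := by
  obtain ⟨m, hm⟩ := hne
  simp only [List.length_cons, List.length_append, List.length_reverse, List.length_range']
  omega

lemma l2_getElem (hn : 4 ≤ n) (hne : Even n) (j : ℕ)
    (hj : j < (1 :: ((List.range' 3 ((n - 2) / 2) 2).reverse ++
      n :: (List.range' 2 ((n - 2) / 2) 2).reverse)).length) :
    (1 :: ((List.range' 3 ((n - 2) / 2) 2).reverse ++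
      n :: (List.range' 2 ((n - 2) / 2) 2).reverse))[j]
      = if j = 0 then 1 else if j ≤ (n - 2) / 2 then n + 1 - 2 * j
        else if j = (n - 2) / 2 + 1 then n else 2 * n - 2 * j := by
  obtain ⟨m, hm⟩ := hne
  rw [l2_length hn ⟨m, hm⟩] at hj
  match j with
  | 0 => simp
  | (j' + 1) =>
    rw [List.getElem_cons_succ, List.getElem_append]
    by_cases hc : j' < (List.range' 3 ((n - 2) / 2) 2).reverse.length
    · rw [dif_pos hc]
      rw [List.getElem_reverse, List.getElem_range']
      simp only [List.length_range', List.length_reverse] at hc ⊢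
      rw [if_neg (by omega), if_pos (by omega)]
      omega
    · rw [dif_neg hc]
      simp only [List.length_reverse, List.length_range'] at hc ⊢
      push_neg at hc
      rcases Nat.eq_or_lt_of_le hc with heq | hlt
      · have h0 : j' - (n - 2) / 2 = 0 := by omega
        simp only [h0, List.getElem_cons_zero]
        rw [if_neg (by omega), if_neg (by omega), if_pos (by omega)]
      · obtain ⟨t, ht⟩ : ∃ t, j' - (n - 2) / 2 = t + 1 := ⟨j' - (n - 2) / 2 - 1, by omega⟩
        simp only [ht, List.getElem_cons_succ, List.getElem_reverse, List.getElem_range',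
          List.length_range']
        rw [if_neg (by omega), if_neg (by omega), if_neg (by omega)]
        omega


/-! ### apply formulas -/

lemma lh_hl : ∀ a ∈ List.range' 1 n, a - 1 < n := by
  intro a ha; rw [List.mem_range'] at ha; obtain ⟨t, ht, rfl⟩ := ha; omega

lemma lh_h1 : ∀ a ∈ List.range' 1 n, 1 ≤ a := by
  intro a ha; rw [List.mem_range'] at ha; obtain ⟨t, ht, rfl⟩ := ha; omega

lemma h_apply (hn : 4 ≤ n) (i : ℕ) (hi : i < n) :
    cyc n (List.range' 1 n) ⟨i, hi⟩
      = ⟨if i + 1 = n then 0 else i + 1, by split_ifs <;> (try exact ‹False›.elim) <;> omega⟩ := by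
  have hlen : (List.range' 1 n).length = n := by rw [List.length_range']
  have hmodv : (i + 1) % n = if i + 1 = n then 0 else i + 1 := by
    split_ifs with h
    · rw [h, Nat.mod_self]
    · exact Nat.mod_eq_of_lt (by omega)
  apply cyc_mk _ lh_hl lh_h1 (List.nodup_range' (s := 1) (n := n)) i ((i + 1) % n)
    (by omega) (by rw [hlen]; exact Nat.mod_lt _ (by omega)) (by rw [hlen])
  · rw [lh_getElem]; omega
  · rw [lh_getElem, hmodv]
    split_ifs <;> (try exact ‹False›.elim) <;> omega

lemma h_pow_n (hn : 4 ≤ n) : cyc n (List.range' 1 n) ^ n = 1 := by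
  rw [cyc_eq _ lh_hl]
  have := List.formPerm_pow_length_eq_one_of_nodup _
    (toF_nodup (List.range' 1 n) lh_hl lh_h1 (List.nodup_range' (s := 1) (n := n)))
  rwa [toF_length, List.length_range'] at this

lemma hinv_apply (hn : 4 ≤ n) (i : ℕ) (hi : i < n) :
    (cyc n (List.range' 1 n))⁻¹ ⟨i, hi⟩
      = ⟨if i = 0 then n - 1 else i - 1, by split_ifs <;> (try exact ‹False›.elim) <;> omega⟩ := by
  rw [Equiv.Perm.inv_eq_iff_eq, h_apply hn _ (by split_ifs <;> (try exact ‹False›.elim) <;> omega)]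
  exact Fin.ext (by simp only; split_ifs <;> (try exact ‹False›.elim) <;> omega)

lemma v4_apply (hn : 4 ≤ n) (i : ℕ) (hi : i < n) :
    cyc n (List.range' 2 (n - 1)) ⟨i, hi⟩
      = ⟨if i = 0 then 0 else if i = n - 1 then 1 else i + 1, by split_ifs <;> (try exact ‹False›.elim) <;> omega⟩ := by
  have hl : ∀ a ∈ List.range' 2 (n - 1), a - 1 < n := by
    intro a ha; rw [List.mem_range'] at ha; obtain ⟨t, ht, rfl⟩ := ha; omega
  have h1 : ∀ a ∈ List.range' 2 (n - 1), 1 ≤ a := by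
    intro a ha; rw [List.mem_range'] at ha; obtain ⟨t, ht, rfl⟩ := ha; omega
  have hlen : (List.range' 2 (n - 1)).length = n - 1 := by rw [List.length_range']
  by_cases h0 : i = 0
  · subst h0
    rw [cyc_fix _ hl h1 hi (by
      rw [List.mem_range']; rintro ⟨t, ht, h⟩; omega)]
    exact Fin.ext (by simp)
  · by_cases hlast : i = n - 1
    · subst hlast
      apply cyc_mk _ hl h1 (List.nodup_range' (s := 2) (n := n - 1)) (n - 2) 0
        (by rw [hlen]; omega) (by rw [hlen]; omega)
        (by rw [hlen, show n - 2 + 1 = n - 1 by omega, Nat.mod_self])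
      all_goals rw [l4_getElem]
      · omega
      · split_ifs <;> (try exact ‹False›.elim) <;> omega
    · apply cyc_mk _ hl h1 (List.nodup_range' (s := 2) (n := n - 1)) (i - 1) i
        (by rw [hlen]; omega) (by rw [hlen]; omega)
        (by rw [hlen, show i - 1 + 1 = i by omega]; exact Nat.mod_eq_of_lt (by omega))
      all_goals rw [l4_getElem]
      · omega
      · split_ifs <;> (try exact ‹False›.elim) <;> omega

lemma v5_apply (hn : 4 ≤ n) (i : ℕ) (hi : i < n) :
    cyc n (2 :: (List.range' 3 (n - 2)).reverse) ⟨i, hi⟩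
      = ⟨if i = 0 then 0 else if i = 1 then n - 1 else i - 1, by split_ifs <;> (try exact ‹False›.elim) <;> omega⟩ := by
  have hl : ∀ a ∈ 2 :: (List.range' 3 (n - 2)).reverse, a - 1 < n := by
    intro a ha
    rcases List.mem_cons.mp ha with rfl | ha
    · omega
    · rw [List.mem_reverse, List.mem_range'] at ha; obtain ⟨t, ht, rfl⟩ := ha; omega
  have h1 : ∀ a ∈ 2 :: (List.range' 3 (n - 2)).reverse, 1 ≤ a := by
    intro a ha
    rcases List.mem_cons.mp ha with rfl | ha
    · omega
    · rw [List.mem_reverse, List.mem_range'] at ha; obtain ⟨t, ht, rfl⟩ := ha; omega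
  have hnd : (2 :: (List.range' 3 (n - 2)).reverse).Nodup := by
    refine List.nodup_cons.mpr ⟨?_, List.nodup_reverse.mpr (List.nodup_range' (s := 3) (n := n - 2))⟩
    rw [List.mem_reverse, List.mem_range']; rintro ⟨t, ht, h⟩; omega
  have hlen := l5_length (n := n) hn
  by_cases h0 : i = 0
  · subst h0
    rw [cyc_fix _ hl h1 hi (by
      intro hmem
      rcases List.mem_cons.mp hmem with h | h
      · omega
      · rw [List.mem_reverse, List.mem_range'] at h; obtain ⟨t, ht, h⟩ := h; omega)]
    exact Fin.ext (by simp)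
  · by_cases h1' : i = 1
    · subst h1'
      apply cyc_mk _ hl h1 hnd 0 1 (by rw [hlen]; omega) (by rw [hlen]; omega)
        (by rw [hlen]; exact Nat.mod_eq_of_lt (by omega))
      all_goals rw [l5_getElem hn]
      · simp
      · split_ifs <;> (try exact ‹False›.elim) <;> omega
    · by_cases h2 : i = 2
      · subst h2
        apply cyc_mk _ hl h1 hnd (n - 2) 0 (by rw [hlen]; omega) (by rw [hlen]; omega)
          (by rw [hlen, show n - 2 + 1 = n - 1 by omega, Nat.mod_self])
        all_goals rw [l5_getElem hn]
        · split_ifs <;> (try exact ‹False›.elim) <;> omega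
        · split_ifs <;> (try exact ‹False›.elim) <;> omega
      · apply cyc_mk _ hl h1 hnd (n - i) (n - i + 1) (by rw [hlen]; omega) (by rw [hlen]; omega)
          (by rw [hlen]; exact Nat.mod_eq_of_lt (by omega))
        all_goals rw [l5_getElem hn]
        · split_ifs <;> (try exact ‹False›.elim) <;> omega
        · split_ifs <;> (try exact ‹False›.elim) <;> omega

lemma v2_apply (hn : 4 ≤ n) (hne : Even n) (i : ℕ) (hi : i < n) :
    cyc n (1 :: ((List.range' 3 ((n - 2) / 2) 2).reverse ++
        n :: (List.range' 2 ((n - 2) / 2) 2).reverse)) ⟨i, hi⟩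
      = ⟨if i = 0 then n - 2 else if i = 1 then 0 else if i = 2 then n - 1 else i - 2,
          by split_ifs <;> (try exact ‹False›.elim) <;> omega⟩ := by
  obtain ⟨m, hm⟩ := hne
  have hl : ∀ a ∈ 1 :: ((List.range' 3 ((n - 2) / 2) 2).reverse ++
      n :: (List.range' 2 ((n - 2) / 2) 2).reverse), a - 1 < n := by
    intro a ha
    simp only [List.mem_cons, List.mem_append, List.mem_reverse, List.mem_range'] at ha
    rcases ha with rfl | (⟨t, ht, rfl⟩ | (rfl | ⟨t, ht, rfl⟩)) <;> omega
  have h1 : ∀ a ∈ 1 :: ((List.range' 3 ((n - 2) / 2) 2).reverse ++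
      n :: (List.range' 2 ((n - 2) / 2) 2).reverse), 1 ≤ a := by
    intro a ha
    simp only [List.mem_cons, List.mem_append, List.mem_reverse, List.mem_range'] at ha
    rcases ha with rfl | (⟨t, ht, rfl⟩ | (rfl | ⟨t, ht, rfl⟩)) <;> omega
  have hnd : (1 :: ((List.range' 3 ((n - 2) / 2) 2).reverse ++
      n :: (List.range' 2 ((n - 2) / 2) 2).reverse)).Nodup := by
    rw [List.nodup_cons]
    constructor
    · intro hmem
      simp only [List.mem_append, List.mem_reverse, List.mem_range', List.mem_cons] at hmem
      rcases hmem with ⟨t, ht, h⟩ | (h | ⟨t, ht, h⟩) <;> omega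
    · rw [List.nodup_append]
      refine ⟨List.nodup_reverse.mpr (List.nodup_range' (s := 3) (n := (n - 2) / 2) 2), ?_, ?_⟩
      · rw [List.nodup_cons]
        constructor
        · intro hmem
          simp only [List.mem_reverse, List.mem_range'] at hmem
          rcases hmem with ⟨t, ht, h⟩
          omega
        · exact List.nodup_reverse.mpr (List.nodup_range' (s := 2) (n := (n - 2) / 2) 2)
      · intro a ha _ hb rfl
        simp only [List.mem_reverse, List.mem_range', List.mem_cons] at ha hb
        obtain ⟨t, ht, rfl⟩ := ha
        rcases hb with h | ⟨u, hu, h⟩ <;> omega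
  have hlen := l2_length hn ⟨m, hm⟩
  by_cases h0 : i = 0
  · subst h0
    apply cyc_mk _ hl h1 hnd 0 1 (by rw [hlen]; omega) (by rw [hlen]; omega)
      (by rw [hlen]; exact Nat.mod_eq_of_lt (by omega))
    all_goals rw [l2_getElem hn ⟨m, hm⟩]
    all_goals split_ifs <;> (try exact ‹False›.elim) <;> omega
  · by_cases h1' : i = 1
    · subst h1'
      apply cyc_mk _ hl h1 hnd (n - 1) 0 (by rw [hlen]; omega) (by rw [hlen]; omega)
        (by rw [hlen, show n - 1 + 1 = n by omega, Nat.mod_self])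
      all_goals rw [l2_getElem hn ⟨m, hm⟩]
      all_goals split_ifs <;> (try exact ‹False›.elim) <;> omega
    · by_cases hlast : i = n - 1
      · subst hlast
        apply cyc_mk _ hl h1 hnd ((n - 2) / 2 + 1) ((n - 2) / 2 + 2)
          (by rw [hlen]; omega) (by rw [hlen]; omega)
          (by rw [hlen]; exact Nat.mod_eq_of_lt (by omega))
        all_goals rw [l2_getElem hn ⟨m, hm⟩]
        all_goals split_ifs <;> (try exact ‹False›.elim) <;> omega
      · rcases Nat.even_or_odd i with ⟨c, hc⟩ | ⟨c, hc⟩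
        · -- i even, 2 ≤ i ≤ n - 2
          apply cyc_mk _ hl h1 hnd ((n - i) / 2) ((n - i) / 2 + 1)
            (by rw [hlen]; omega) (by rw [hlen]; omega)
            (by rw [hlen]; exact Nat.mod_eq_of_lt (by omega))
          all_goals rw [l2_getElem hn ⟨m, hm⟩]
          all_goals split_ifs <;> (try exact ‹False›.elim) <;> omega
        · -- i odd, 3 ≤ i ≤ n - 3
          apply cyc_mk _ hl h1 hnd (n - 1 - (i - 1) / 2) (n - 1 - (i - 1) / 2 + 1)
            (by rw [hlen]; omega) (by rw [hlen]; omega)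
            (by rw [hlen]; exact Nat.mod_eq_of_lt (by omega))
          all_goals rw [l2_getElem hn ⟨m, hm⟩]
          all_goals split_ifs <;> (try exact ‹False›.elim) <;> omega

end Stmt7Aux


set_option maxHeartbeats 2000000 in
theorem stmt7 (n : ℕ) (hn : 4 ≤ n) (hne : Even n) :
    OrigamiEquiv (Tact (OE5 n)) (OE2 n) ∧
      OrigamiEquiv (Tact^[n - 3] (OE2 n)) (OE4 n) := by
  obtain ⟨m, hm⟩ := hne
  constructor
  · refine ⟨1, ?_, ?_⟩
    · show 1 * cyc n (List.range' 1 n) * 1⁻¹ = cyc n (List.range' 1 n)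
      rw [one_mul, inv_one, mul_one]
    · show 1 * (cyc n (2 :: (List.range' 3 (n - 2)).reverse) *
          (cyc n (List.range' 1 n))⁻¹) * 1⁻¹
        = cyc n (1 :: ((List.range' 3 ((n - 2) / 2) 2).reverse ++
            n :: (List.range' 2 ((n - 2) / 2) 2).reverse))
      rw [one_mul, inv_one, mul_one]
      ext x
      obtain ⟨i, hi⟩ := x
      rw [Equiv.Perm.mul_apply, Stmt7Aux.hinv_apply hn i hi, Stmt7Aux.v5_apply hn,
        Stmt7Aux.v2_apply hn ⟨m, hm⟩ i hi]
      simp only [Fin.mk.injEq]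
      split_ifs <;> (try exact ‹False›.elim) <;> omega
  · have hiter : ∀ (k : ℕ) (p : Equiv.Perm (Fin n) × Equiv.Perm (Fin n)),
        Tact^[k] p = (p.1, p.2 * p.1⁻¹ ^ k) := by
      intro k
      induction k with
      | zero => intro p; simp
      | succ k ih =>
        intro p
        rw [Function.iterate_succ_apply', ih]
        simp only [Tact, pow_succ, mul_assoc]
    refine ⟨cyc n (List.range' 1 n), ?_, ?_⟩
    · rw [hiter]
      show cyc n (List.range' 1 n) * cyc n (List.range' 1 n) *
          (cyc n (List.range' 1 n))⁻¹ = cyc n (List.range' 1 n)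
      exact mul_inv_cancel_right _ _
    · rw [hiter]
      show cyc n (List.range' 1 n) *
          (cyc n (1 :: ((List.range' 3 ((n - 2) / 2) 2).reverse ++
            n :: (List.range' 2 ((n - 2) / 2) 2).reverse)) *
            (cyc n (List.range' 1 n))⁻¹ ^ (n - 3)) * (cyc n (List.range' 1 n))⁻¹
        = cyc n (List.range' 2 (n - 1))
      have h3 : (cyc n (List.range' 1 n))⁻¹ ^ (n - 3) = cyc n (List.range' 1 n) ^ 3 := by
        rw [inv_pow]
        apply inv_eq_of_mul_eq_one_left
        rw [← pow_add, show 3 + (n - 3) = n by omega]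
        exact Stmt7Aux.h_pow_n hn
      rw [h3]
      rw [show (cyc n (List.range' 1 n)) ^ 3
          = cyc n (List.range' 1 n) * cyc n (List.range' 1 n) * cyc n (List.range' 1 n) by
        rw [pow_succ, pow_succ, pow_one]]
      ext x
      obtain ⟨i, hi⟩ := x
      simp only [Equiv.Perm.mul_apply, Stmt7Aux.hinv_apply hn, Stmt7Aux.h_apply hn,
        Stmt7Aux.v2_apply hn ⟨m, hm⟩, Stmt7Aux.v4_apply hn, Fin.mk.injEq]
      split_ifs <;> (try exact ‹False›.elim) <;> omega
end

section
/- Let n ≥ 5 be odd, and let O₂ᴬ = ((1,2,…,n),(1,n-1,n-3,…,2)(n,n-2,…,3)), O₄ = ((1,2,…,n),(2,3,…,n)), and O₅ = ((1,2,…,n),(2,n,n-1,…,3)). Then T(O₅) ≃ O₂ᴬ and T^{n-3}(O₂ᴬ) ≃ O₄, where ≃ denotes equivalence by simultaneous conjugation. -/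
open Equiv

/-- `O₂ᴬ = ((1,2,...,n), (1, n-1, n-3, ..., 2)(n, n-2, ..., 3))` for odd `n` -/
def OA2 (n : ℕ) : Equiv.Perm (Fin n) × Equiv.Perm (Fin n) :=
  (cyc n (List.range' 1 n),
   cyc n (1 :: (List.range' 2 ((n - 1) / 2) 2).reverse) *
     cyc n ((List.range' 3 ((n - 1) / 2) 2).reverse))

lemma filterMap_val (n : ℕ) (l : List ℕ) (h : ∀ a ∈ l, a - 1 < n) :
    (l.filterMap fun a => if h : a - 1 < n then some (⟨a - 1, h⟩ : Fin n) else none).map Fin.val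
      = l.map (· - 1) := by
  induction l with
  | nil => simp
  | cons a l ih =>
    rw [List.filterMap_cons, dif_pos (h a (List.mem_cons_self (a := a) (l := l))), List.map_cons,
      List.map_cons, ih (fun b hb => h b (List.mem_cons_of_mem _ hb))]

lemma cyc_apply_val (n : ℕ) (l : List ℕ) (h : ∀ a ∈ l, a - 1 < n)
    (hnd : (l.map (· - 1)).Nodup) (x y : Fin n) (i j : ℕ) (hi : i < l.length)
    (hj : j < l.length) (hij : (i + 1) % l.length = j)
    (hx : l[i] - 1 = x.val) (hy : l[j] - 1 = y.val) :
    cyc n l x = y := by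
  set L := l.filterMap fun a => if h : a - 1 < n then some (⟨a - 1, h⟩ : Fin n) else none with hL
  have hmap : L.map Fin.val = l.map (· - 1) := filterMap_val n l h
  have hlen : L.length = l.length := by
    have := congrArg List.length hmap; simpa using this
  have hndL : L.Nodup := List.Nodup.of_map Fin.val (hmap ▸ hnd)
  have hget : ∀ (k : ℕ) (hk : k < l.length), (L[k]'(hlen ▸ hk)).val = l[k] - 1 := by
    intro k hk
    have h1 : (L.map Fin.val)[k]'(by simpa [hlen] using hk) = (L[k]'(hlen ▸ hk)).val :=
      List.getElem_map _
    have h2 : (l.map (· - 1))[k]'(by simpa using hk) = l[k] - 1 := List.getElem_map _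
    have h3 := List.getElem_of_eq hmap (l := L.map Fin.val) (by simpa [hlen] using hk)
    rw [h1] at h3
    rw [h3, h2]
  have hx' : L[i]'(hlen ▸ hi) = x := Fin.ext (by rw [hget i hi, hx])
  have hy' : L[j]'(hlen ▸ hj) = y := Fin.ext (by rw [hget j hj, hy])
  have := List.formPerm_apply_getElem L hndL i (hlen ▸ hi)
  rw [cyc, ← hL, ← hx', this]
  rw [← hy']
  congr 1
  rw [hlen, hij]

lemma cyc_apply_of_not_mem (n : ℕ) (l : List ℕ) (x : Fin n)
    (hx : ∀ a ∈ l, a - 1 ≠ x.val) : cyc n l x = x := by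
  apply List.formPerm_apply_of_notMem
  intro hmem
  rw [List.mem_filterMap] at hmem
  obtain ⟨a, ha, hfa⟩ := hmem
  split at hfa
  · exact hx a ha (by simpa using congrArg Fin.val (Option.some_injective _ hfa))
  · cases hfa

lemma nodup_map_sub (l : List ℕ) (h : ∀ a ∈ l, 1 ≤ a) (hl : l.Nodup) :
    (l.map (· - 1)).Nodup :=
  hl.map_on (fun a ha b hb hab => by have := h a ha; have := h b hb; omega)

lemma mod_helper (n a b : ℕ) (h : a = b + n ∨ a = b) (hb : b < n) : a % n = b := by
  rcases h with h | h <;> subst h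
  · rw [Nat.add_mod_right]; exact Nat.mod_eq_of_lt hb
  · exact Nat.mod_eq_of_lt hb

/-! ### The horizontal cycle `H = (1,2,...,n)` -/

lemma H_apply {n : ℕ} (hn : 5 ≤ n) (x y : Fin n)
    (h : x.val + 1 = y.val ∨ (x.val = n - 1 ∧ y.val = 0)) :
    cyc n (List.range' 1 n) x = y := by
  have hall : ∀ a ∈ List.range' 1 n, a - 1 < n := by
    intro a ha; rw [List.mem_range'_1] at ha; omega
  have hnd := nodup_map_sub _ (fun a ha => by rw [List.mem_range'_1] at ha; omega)
    (List.nodup_range' (s := 1) (n := n))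
  have hy2 := y.isLt
  have hx2 := x.isLt
  rcases h with h | ⟨h1, h2⟩
  · refine cyc_apply_val n _ hall hnd x y x.val (x.val + 1) ?_ ?_ ?_ ?_ ?_
    · rw [List.length_range']; omega
    · rw [List.length_range']; omega
    · rw [List.length_range']; exact mod_helper _ _ _ (Or.inr (by omega)) (by omega)
    · rw [List.getElem_range']; omega
    · rw [List.getElem_range']; omega
  · refine cyc_apply_val n _ hall hnd x y (n - 1) 0 ?_ ?_ ?_ ?_ ?_
    · rw [List.length_range']; omega
    · rw [List.length_range']; omega
    · rw [List.length_range']; exact mod_helper n _ _ (by omega) (by omega)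
    · rw [List.getElem_range']; omega
    · rw [List.getElem_range']; omega

lemma Hinv_apply {n : ℕ} (hn : 5 ≤ n) (x y : Fin n)
    (h : y.val + 1 = x.val ∨ (y.val = n - 1 ∧ x.val = 0)) :
    (cyc n (List.range' 1 n))⁻¹ x = y := by
  rw [Equiv.Perm.inv_def, Equiv.symm_apply_eq]
  exact (H_apply hn y x h).symm

lemma Hpow_apply {n : ℕ} (hn : 5 ≤ n) (k : ℕ) (x : Fin n) :
    ((cyc n (List.range' 1 n)) ^ k) x = ⟨(x.val + k) % n, Nat.mod_lt _ (by omega)⟩ := by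
  induction k generalizing x with
  | zero =>
    apply Fin.ext
    simp [Nat.mod_eq_of_lt x.isLt]
  | succ k ih =>
    have hx2 := x.isLt
    rcases Nat.lt_or_ge (x.val + 1) n with hlt | hge
    · rw [pow_succ, Equiv.Perm.mul_apply, H_apply hn x ⟨x.val + 1, hlt⟩ (Or.inl rfl), ih]
      apply Fin.ext
      show (x.val + 1 + k) % n = (x.val + (k + 1)) % n
      congr 1
      omega
    · rw [pow_succ, Equiv.Perm.mul_apply,
        H_apply hn x ⟨0, by omega⟩ (Or.inr ⟨by omega, rfl⟩), ih]
      apply Fin.ext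
      show (0 + k) % n = (x.val + (k + 1)) % n
      rw [(by omega : x.val + (k + 1) = k + n), Nat.add_mod_right, Nat.zero_add]

lemma Hpow_n {n : ℕ} (hn : 5 ≤ n) : (cyc n (List.range' 1 n)) ^ n = 1 := by
  ext x
  rw [Hpow_apply hn]
  show ((x.val + n) % n) = x.val
  rw [Nat.add_mod_right]
  exact Nat.mod_eq_of_lt x.isLt

/-! ### `V5 = (2, n, n-1, ..., 3)` (1-based) -/

lemma V5_get {n : ℕ} (hn : 5 ≤ n) (k : ℕ)
    (hk : k < (2 :: (List.range' 3 (n - 2)).reverse).length) :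
    (2 :: (List.range' 3 (n - 2)).reverse)[k] = if k = 0 then 2 else n + 1 - k := by
  simp only [List.length_cons, List.length_reverse, List.length_range'] at hk
  match k with
  | 0 => rfl
  | (k + 1) =>
    rw [List.getElem_cons_succ, List.getElem_reverse, List.getElem_range', if_neg (by omega)]
    simp only [List.length_range']
    omega

lemma V5_apply {n : ℕ} (hn : 5 ≤ n) (x y : Fin n)
    (h : (x.val = 0 ∧ y = x) ∨ (x.val = 1 ∧ y.val = n - 1) ∨ (2 ≤ x.val ∧ y.val = x.val - 1)) :
    cyc n (2 :: (List.range' 3 (n - 2)).reverse) x = y := by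
  have hmem : ∀ a ∈ 2 :: (List.range' 3 (n - 2)).reverse, 2 ≤ a ∧ a ≤ n := by
    intro a ha
    rcases List.mem_cons.mp ha with h' | h'
    · omega
    · rw [List.mem_reverse, List.mem_range'_1] at h'; omega
  have hall : ∀ a ∈ 2 :: (List.range' 3 (n - 2)).reverse, a - 1 < n := by
    intro a ha; have := hmem a ha; omega
  have hnd : ((2 :: (List.range' 3 (n - 2)).reverse).map (· - 1)).Nodup := by
    apply nodup_map_sub _ (fun a ha => by have := hmem a ha; omega)
    rw [List.nodup_cons]
    refine ⟨?_, List.nodup_reverse.mpr (List.nodup_range' (s := 3) (n := n - 2))⟩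
    rw [List.mem_reverse, List.mem_range'_1]; omega
  have hx2 := x.isLt
  have hy2 := y.isLt
  have hlen : (2 :: (List.range' 3 (n - 2)).reverse).length = n - 2 + 1 := by
    simp [List.length_range']
  rcases h with ⟨h1, h2⟩ | ⟨h1, h2⟩ | ⟨h1, h2⟩
  · subst h2
    apply cyc_apply_of_not_mem
    intro a ha; have := hmem a ha; omega
  · refine cyc_apply_val n _ hall hnd x y 0 1 ?_ ?_ ?_ ?_ ?_
    · rw [hlen]; omega
    · rw [hlen]; omega
    · rw [hlen]; exact mod_helper _ _ _ (Or.inr (by omega)) (by omega)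
    · rw [V5_get hn, if_pos rfl]; omega
    · rw [V5_get hn, if_neg (by omega)]; omega
  · by_cases hx3 : x.val = 2
    · refine cyc_apply_val n _ hall hnd x y (n - 2) 0 ?_ ?_ ?_ ?_ ?_
      · rw [hlen]; omega
      · rw [hlen]; omega
      · rw [hlen]; exact mod_helper _ _ _ (Or.inl (by omega)) (by omega)
      · rw [V5_get hn, if_neg (by omega)]; omega
      · rw [V5_get hn, if_pos rfl]; omega
    · refine cyc_apply_val n _ hall hnd x y (n - x.val) (n - x.val + 1) ?_ ?_ ?_ ?_ ?_
      · rw [hlen]; omega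
      · rw [hlen]; omega
      · rw [hlen]; exact mod_helper _ _ _ (Or.inr (by omega)) (by omega)
      · rw [V5_get hn, if_neg (by omega)]; omega
      · rw [V5_get hn, if_neg (by omega)]; omega

/-! ### `V4 = (2, 3, ..., n)` (1-based) -/

lemma V4_apply {n : ℕ} (hn : 5 ≤ n) (x y : Fin n)
    (h : (x.val = 0 ∧ y = x) ∨ (1 ≤ x.val ∧ x.val ≤ n - 2 ∧ y.val = x.val + 1) ∨
      (x.val = n - 1 ∧ y.val = 1)) :
    cyc n (List.range' 2 (n - 1)) x = y := by
  have hmem : ∀ a ∈ List.range' 2 (n - 1), 2 ≤ a ∧ a ≤ n := by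
    intro a ha; rw [List.mem_range'_1] at ha; omega
  have hall : ∀ a ∈ List.range' 2 (n - 1), a - 1 < n := by
    intro a ha; have := hmem a ha; omega
  have hnd : ((List.range' 2 (n - 1)).map (· - 1)).Nodup :=
    nodup_map_sub _ (fun a ha => by have := hmem a ha; omega) (List.nodup_range' (s := 2) (n := n - 1))
  have hx2 := x.isLt
  have hy2 := y.isLt
  rcases h with ⟨h1, h2⟩ | ⟨h1, h2, h3⟩ | ⟨h1, h2⟩
  · subst h2
    apply cyc_apply_of_not_mem
    intro a ha; have := hmem a ha; omega
  · refine cyc_apply_val n _ hall hnd x y (x.val - 1) x.val ?_ ?_ ?_ ?_ ?_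
    · rw [List.length_range']; omega
    · rw [List.length_range']; omega
    · rw [List.length_range']; exact mod_helper _ _ _ (Or.inr (by omega)) (by omega)
    · rw [List.getElem_range']; omega
    · rw [List.getElem_range']; omega
  · refine cyc_apply_val n _ hall hnd x y (n - 2) 0 ?_ ?_ ?_ ?_ ?_
    · rw [List.length_range']; omega
    · rw [List.length_range']; omega
    · rw [List.length_range']; exact mod_helper _ _ _ (Or.inl (by omega)) (by omega)
    · rw [List.getElem_range']; omega
    · rw [List.getElem_range']; omega

/-! ### `P1 = (1, n-1, n-3, ..., 2)` (1-based) -/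

lemma P1_get {n m : ℕ} (hm : n = 2 * m + 1) (k : ℕ)
    (hk : k < (1 :: (List.range' 2 m 2).reverse).length) :
    (1 :: (List.range' 2 m 2).reverse)[k] = if k = 0 then 1 else 2 * m + 2 - 2 * k := by
  simp only [List.length_cons, List.length_reverse, List.length_range'] at hk
  match k with
  | 0 => rfl
  | (k + 1) =>
    rw [List.getElem_cons_succ, List.getElem_reverse, List.getElem_range', if_neg (by omega)]
    simp only [List.length_range']
    omega

lemma P1_apply {n m : ℕ} (hn : 5 ≤ n) (hm : n = 2 * m + 1) (x y : Fin n)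
    (h : (x.val = 0 ∧ y.val = n - 2) ∨ (x.val = 1 ∧ y.val = 0) ∨
      (∃ r, x.val = 2 * r + 1 ∧ 3 ≤ x.val ∧ y.val = x.val - 2) ∨
      (∃ r, x.val = 2 * r ∧ x.val ≠ 0 ∧ y = x)) :
    cyc n (1 :: (List.range' 2 ((n - 1) / 2) 2).reverse) x = y := by
  have hm' : (n - 1) / 2 = m := by omega
  rw [hm']
  have hmem : ∀ a ∈ 1 :: (List.range' 2 m 2).reverse, a = 1 ∨ ∃ i < m, a = 2 + 2 * i := by
    intro a ha
    rcases List.mem_cons.mp ha with h' | h'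
    · exact Or.inl h'
    · rw [List.mem_reverse, List.mem_range'] at h'; exact Or.inr h'
  have hall : ∀ a ∈ 1 :: (List.range' 2 m 2).reverse, a - 1 < n := by
    intro a ha; rcases hmem a ha with h' | ⟨i, hi, h'⟩ <;> omega
  have hnd : ((1 :: (List.range' 2 m 2).reverse).map (· - 1)).Nodup := by
    apply nodup_map_sub
    · intro a ha; rcases hmem a ha with h' | ⟨i, hi, h'⟩ <;> omega
    · rw [List.nodup_cons, List.mem_reverse, List.mem_range']
      exact ⟨by rintro ⟨i, hi, h'⟩; omega, List.nodup_reverse.mpr (List.nodup_range' (s := 2) (n := m) 2)⟩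
  have hlen : (1 :: (List.range' 2 m 2).reverse).length = m + 1 := by simp
  have hx2 := x.isLt
  have hy2 := y.isLt
  rcases h with ⟨h1, h2⟩ | ⟨h1, h2⟩ | ⟨r, h1, h2, h3⟩ | ⟨r, h1, h2, h3⟩
  · refine cyc_apply_val n _ hall hnd x y 0 1 ?_ ?_ ?_ ?_ ?_
    · rw [hlen]; omega
    · rw [hlen]; omega
    · rw [hlen]; exact mod_helper _ _ _ (Or.inr (by omega)) (by omega)
    · rw [P1_get hm, if_pos rfl]; omega
    · rw [P1_get hm, if_neg (by omega)]; omega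
  · refine cyc_apply_val n _ hall hnd x y m 0 ?_ ?_ ?_ ?_ ?_
    · rw [hlen]; omega
    · rw [hlen]; omega
    · rw [hlen]; exact mod_helper _ _ _ (Or.inl (by omega)) (by omega)
    · rw [P1_get hm, if_neg (by omega)]; omega
    · rw [P1_get hm, if_pos rfl]; omega
  · refine cyc_apply_val n _ hall hnd x y (m - r) (m - r + 1) ?_ ?_ ?_ ?_ ?_
    · rw [hlen]; omega
    · rw [hlen]; omega
    · rw [hlen]; exact mod_helper _ _ _ (Or.inr (by omega)) (by omega)
    · rw [P1_get hm, if_neg (by omega)]; omega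
    · rw [P1_get hm, if_neg (by omega)]; omega
  · subst h3
    apply cyc_apply_of_not_mem
    intro a ha; rcases hmem a ha with h' | ⟨i, hi, h'⟩ <;> omega

/-! ### `P2 = (n, n-2, ..., 3)` (1-based) -/

lemma P2_get {n m : ℕ} (hm : n = 2 * m + 1) (k : ℕ)
    (hk : k < (List.range' 3 m 2).reverse.length) :
    (List.range' 3 m 2).reverse[k] = 2 * m + 1 - 2 * k := by
  simp only [List.length_reverse, List.length_range'] at hk
  rw [List.getElem_reverse, List.getElem_range']
  simp only [List.length_range']
  omega

lemma P2_apply {n m : ℕ} (hn : 5 ≤ n) (hm : n = 2 * m + 1) (x y : Fin n)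
    (h : (x.val = 2 ∧ y.val = n - 1) ∨
      (∃ r, x.val = 2 * r ∧ 4 ≤ x.val ∧ y.val = x.val - 2) ∨
      ((x.val = 0 ∨ ∃ r, x.val = 2 * r + 1) ∧ y = x)) :
    cyc n ((List.range' 3 ((n - 1) / 2) 2).reverse) x = y := by
  have hm' : (n - 1) / 2 = m := by omega
  rw [hm']
  have hmem : ∀ a ∈ (List.range' 3 m 2).reverse, ∃ i < m, a = 3 + 2 * i := by
    intro a ha; rw [List.mem_reverse, List.mem_range'] at ha; exact ha
  have hall : ∀ a ∈ (List.range' 3 m 2).reverse, a - 1 < n := by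
    intro a ha; obtain ⟨i, hi, h'⟩ := hmem a ha; omega
  have hnd : (((List.range' 3 m 2).reverse).map (· - 1)).Nodup := by
    apply nodup_map_sub
    · intro a ha; obtain ⟨i, hi, h'⟩ := hmem a ha; omega
    · exact List.nodup_reverse.mpr (List.nodup_range' (s := 3) (n := m) 2)
  have hlen : ((List.range' 3 m 2).reverse).length = m := by simp
  have hx2 := x.isLt
  have hy2 := y.isLt
  rcases h with ⟨h1, h2⟩ | ⟨r, h1, h2, h3⟩ | ⟨h1, h2⟩
  · refine cyc_apply_val n _ hall hnd x y (m - 1) 0 ?_ ?_ ?_ ?_ ?_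
    · rw [hlen]; omega
    · rw [hlen]; omega
    · rw [hlen]; exact mod_helper _ _ _ (Or.inl (by omega)) (by omega)
    · rw [P2_get hm]; omega
    · rw [P2_get hm]; omega
  · refine cyc_apply_val n _ hall hnd x y (m - r) (m - r + 1) ?_ ?_ ?_ ?_ ?_
    · rw [hlen]; omega
    · rw [hlen]; omega
    · rw [hlen]; exact mod_helper _ _ _ (Or.inr (by omega)) (by omega)
    · rw [P2_get hm]; omega
    · rw [P2_get hm]; omega
  · subst h2
    apply cyc_apply_of_not_mem
    intro a ha; obtain ⟨i, hi, h'⟩ := hmem a ha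
    rcases h1 with h1 | ⟨r, h1⟩ <;> omega

/-! ### Main theorem -/

attribute [irreducible] cyc

lemma app_congr {α : Type*} (f : Equiv.Perm α) {a b c : α} (h1 : a = b) (h2 : f b = c) :
    f a = c := by rw [h1, h2]

lemma Tact_iter {n : ℕ} (k : ℕ) (p : Equiv.Perm (Fin n) × Equiv.Perm (Fin n)) :
    Tact^[k] p = (p.1, p.2 * (p.1⁻¹) ^ k) := by
  induction k generalizing p with
  | zero => simp
  | succ k ih =>
    rw [Function.iterate_succ_apply, ih]
    simp [Tact, pow_succ', mul_assoc]

set_option maxHeartbeats 1000000 in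
lemma part1 (n m : ℕ) (hn : 5 ≤ n) (hm : n = 2 * m + 1) :
    OrigamiEquiv (Tact (OE5 n)) (OA2 n) := by
  refine ⟨1, by simp [Tact, OE5, OA2], ?_⟩
  simp only [Tact, OE5, OA2, one_mul, inv_one, mul_one]
  ext x
  simp only [Equiv.Perm.mul_apply]
  have hx2 := x.isLt
  by_cases h0 : x.val = 0
  · have e1 : (cyc n (List.range' 1 n))⁻¹ x = ⟨n - 1, by omega⟩ :=
      Hinv_apply hn x _ (Or.inr ⟨rfl, h0⟩)
    have e2 : cyc n (2 :: (List.range' 3 (n - 2)).reverse) (⟨n - 1, by omega⟩ : Fin n)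
        = ⟨n - 2, by omega⟩ :=
      V5_apply hn _ _ (Or.inr (Or.inr ⟨by show 2 ≤ n - 1; omega, by show n - 2 = n - 1 - 1; omega⟩))
    have e3 : cyc n ((List.range' 3 ((n - 1) / 2) 2).reverse) x = x :=
      P2_apply hn hm x x (Or.inr (Or.inr ⟨Or.inl h0, rfl⟩))
    have e4 : cyc n (1 :: (List.range' 2 ((n - 1) / 2) 2).reverse) x = ⟨n - 2, by omega⟩ :=
      P1_apply hn hm x _ (Or.inl ⟨h0, rfl⟩)
    exact congrArg Fin.val ((app_congr _ e1 e2).trans (app_congr _ e3 e4).symm)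
  · by_cases h1 : x.val = 1
    · have e1 : (cyc n (List.range' 1 n))⁻¹ x = ⟨0, by omega⟩ :=
        Hinv_apply hn x _ (Or.inl (by show 0 + 1 = x.val; omega))
      have e2 : cyc n (2 :: (List.range' 3 (n - 2)).reverse) (⟨0, by omega⟩ : Fin n)
          = ⟨0, by omega⟩ :=
        V5_apply hn _ _ (Or.inl ⟨rfl, rfl⟩)
      have e3 : cyc n ((List.range' 3 ((n - 1) / 2) 2).reverse) x = x :=
        P2_apply hn hm x x (Or.inr (Or.inr ⟨Or.inr ⟨0, by omega⟩, rfl⟩))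
      have e4 : cyc n (1 :: (List.range' 2 ((n - 1) / 2) 2).reverse) x = ⟨0, by omega⟩ :=
        P1_apply hn hm x _ (Or.inr (Or.inl ⟨h1, rfl⟩))
      exact congrArg Fin.val ((app_congr _ e1 e2).trans (app_congr _ e3 e4).symm)
    · by_cases h2 : x.val = 2
      · have e1 : (cyc n (List.range' 1 n))⁻¹ x = ⟨1, by omega⟩ :=
          Hinv_apply hn x _ (Or.inl (by show 1 + 1 = x.val; omega))
        have e2 : cyc n (2 :: (List.range' 3 (n - 2)).reverse) (⟨1, by omega⟩ : Fin n)
            = ⟨n - 1, by omega⟩ :=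
          V5_apply hn _ _ (Or.inr (Or.inl ⟨rfl, rfl⟩))
        have e3 : cyc n ((List.range' 3 ((n - 1) / 2) 2).reverse) x = ⟨n - 1, by omega⟩ :=
          P2_apply hn hm x _ (Or.inl ⟨h2, rfl⟩)
        have e4 : cyc n (1 :: (List.range' 2 ((n - 1) / 2) 2).reverse)
            (⟨n - 1, by omega⟩ : Fin n) = ⟨n - 1, by omega⟩ :=
          P1_apply hn hm _ _ (Or.inr (Or.inr (Or.inr
            ⟨m, by show n - 1 = 2 * m; omega, by show n - 1 ≠ 0; omega, rfl⟩)))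
        exact congrArg Fin.val ((app_congr _ e1 e2).trans (app_congr _ e3 e4).symm)
      · have h3 : 3 ≤ x.val := by omega
        have e1 : (cyc n (List.range' 1 n))⁻¹ x = ⟨x.val - 1, by omega⟩ :=
          Hinv_apply hn x _ (Or.inl (by show x.val - 1 + 1 = x.val; omega))
        have e2 : cyc n (2 :: (List.range' 3 (n - 2)).reverse) (⟨x.val - 1, by omega⟩ : Fin n)
            = ⟨x.val - 2, by omega⟩ :=
          V5_apply hn _ _ (Or.inr (Or.inr
            ⟨by show 2 ≤ x.val - 1; omega, by show x.val - 2 = x.val - 1 - 1; omega⟩))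
        rcases Nat.even_or_odd x.val with ⟨r, hr⟩ | ⟨r, hr⟩
        · have e3 : cyc n ((List.range' 3 ((n - 1) / 2) 2).reverse) x = ⟨x.val - 2, by omega⟩ :=
            P2_apply hn hm x _ (Or.inr (Or.inl ⟨r, by omega, by omega, rfl⟩))
          have e4 : cyc n (1 :: (List.range' 2 ((n - 1) / 2) 2).reverse)
              (⟨x.val - 2, by omega⟩ : Fin n) = ⟨x.val - 2, by omega⟩ :=
            P1_apply hn hm _ _ (Or.inr (Or.inr (Or.inr
              ⟨r - 1, by show x.val - 2 = 2 * (r - 1); omega,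
                by show x.val - 2 ≠ 0; omega, rfl⟩)))
          exact congrArg Fin.val ((app_congr _ e1 e2).trans (app_congr _ e3 e4).symm)
        · have e3 : cyc n ((List.range' 3 ((n - 1) / 2) 2).reverse) x = x :=
            P2_apply hn hm x x (Or.inr (Or.inr ⟨Or.inr ⟨r, by omega⟩, rfl⟩))
          have e4 : cyc n (1 :: (List.range' 2 ((n - 1) / 2) 2).reverse) x
              = ⟨x.val - 2, by omega⟩ :=
            P1_apply hn hm x _ (Or.inr (Or.inr (Or.inl ⟨r, by omega, by omega, rfl⟩)))
          exact congrArg Fin.val ((app_congr _ e1 e2).trans (app_congr _ e3 e4).symm)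

set_option maxHeartbeats 1000000 in
lemma part2 (n m : ℕ) (hn : 5 ≤ n) (hm : n = 2 * m + 1) :
    OrigamiEquiv (Tact^[n - 3] (OA2 n)) (OE4 n) := by
  rw [Tact_iter]
  have hp3 : ((cyc n (List.range' 1 n))⁻¹) ^ (n - 3) = (cyc n (List.range' 1 n)) ^ 3 := by
    rw [inv_pow]
    apply inv_eq_of_mul_eq_one_right
    rw [← pow_add, (by omega : n - 3 + 3 = n), Hpow_n hn]
  refine ⟨cyc n (List.range' 1 n), ?_, ?_⟩
  · simp only [OA2, OE4]
    exact mul_inv_cancel_right _ _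
  · simp only [OA2, OE4]
    rw [hp3]
    ext x
    simp only [Equiv.Perm.mul_apply]
    have hx2 := x.isLt
    by_cases h0 : x.val = 0
    · have e1 : (cyc n (List.range' 1 n))⁻¹ x = ⟨n - 1, by omega⟩ :=
        Hinv_apply hn x _ (Or.inr ⟨rfl, h0⟩)
      have e2 : (cyc n (List.range' 1 n) ^ 3) (⟨n - 1, by omega⟩ : Fin n) = ⟨2, by omega⟩ := by
        rw [Hpow_apply hn]
        exact Fin.ext (mod_helper n _ _ (Or.inl (by show n - 1 + 3 = 2 + n; omega)) (by omega))
      have e3 : cyc n ((List.range' 3 ((n - 1) / 2) 2).reverse) (⟨2, by omega⟩ : Fin n)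
          = ⟨n - 1, by omega⟩ :=
        P2_apply hn hm _ _ (Or.inl ⟨rfl, rfl⟩)
      have e4 : cyc n (1 :: (List.range' 2 ((n - 1) / 2) 2).reverse)
          (⟨n - 1, by omega⟩ : Fin n) = ⟨n - 1, by omega⟩ :=
        P1_apply hn hm _ _ (Or.inr (Or.inr (Or.inr
          ⟨m, by show n - 1 = 2 * m; omega, by show n - 1 ≠ 0; omega, rfl⟩)))
      have e5 : cyc n (List.range' 1 n) (⟨n - 1, by omega⟩ : Fin n) = x :=
        H_apply hn _ x (Or.inr ⟨rfl, h0⟩)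
      have e6 : cyc n (List.range' 2 (n - 1)) x = x :=
        V4_apply hn x x (Or.inl ⟨h0, rfl⟩)
      exact congrArg Fin.val ((app_congr _ (app_congr _ (app_congr _ (app_congr _ e1 e2) e3) e4) e5).trans e6.symm)
    · by_cases hn2 : x.val = n - 2
      · have e1 : (cyc n (List.range' 1 n))⁻¹ x = ⟨n - 3, by omega⟩ :=
          Hinv_apply hn x _ (Or.inl (by show n - 3 + 1 = x.val; omega))
        have e2 : (cyc n (List.range' 1 n) ^ 3) (⟨n - 3, by omega⟩ : Fin n)
            = ⟨0, by omega⟩ := by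
          rw [Hpow_apply hn]
          exact Fin.ext (mod_helper n _ _ (Or.inl (by show n - 3 + 3 = 0 + n; omega)) (by omega))
        have e3 : cyc n ((List.range' 3 ((n - 1) / 2) 2).reverse) (⟨0, by omega⟩ : Fin n)
            = ⟨0, by omega⟩ :=
          P2_apply hn hm _ _ (Or.inr (Or.inr ⟨Or.inl rfl, rfl⟩))
        have e4 : cyc n (1 :: (List.range' 2 ((n - 1) / 2) 2).reverse) (⟨0, by omega⟩ : Fin n)
            = ⟨n - 2, by omega⟩ :=
          P1_apply hn hm _ _ (Or.inl ⟨rfl, rfl⟩)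
        have e5 : cyc n (List.range' 1 n) (⟨n - 2, by omega⟩ : Fin n) = ⟨n - 1, by omega⟩ :=
          H_apply hn _ _ (Or.inl (by show n - 2 + 1 = n - 1; omega))
        have e6 : cyc n (List.range' 2 (n - 1)) x = ⟨n - 1, by omega⟩ :=
          V4_apply hn x _ (Or.inr (Or.inl ⟨by omega, by omega, by show n - 1 = x.val + 1; omega⟩))
        exact congrArg Fin.val ((app_congr _ (app_congr _ (app_congr _ (app_congr _ e1 e2) e3) e4) e5).trans e6.symm)
      · by_cases hn1 : x.val = n - 1
        · have e1 : (cyc n (List.range' 1 n))⁻¹ x = ⟨n - 2, by omega⟩ :=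
            Hinv_apply hn x _ (Or.inl (by show n - 2 + 1 = x.val; omega))
          have e2 : (cyc n (List.range' 1 n) ^ 3) (⟨n - 2, by omega⟩ : Fin n)
              = ⟨1, by omega⟩ := by
            rw [Hpow_apply hn]
            exact Fin.ext (mod_helper n _ _ (Or.inl (by show n - 2 + 3 = 1 + n; omega)) (by omega))
          have e3 : cyc n ((List.range' 3 ((n - 1) / 2) 2).reverse) (⟨1, by omega⟩ : Fin n)
              = ⟨1, by omega⟩ :=
            P2_apply hn hm _ _ (Or.inr (Or.inr ⟨Or.inr ⟨0, rfl⟩, rfl⟩))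
          have e4 : cyc n (1 :: (List.range' 2 ((n - 1) / 2) 2).reverse) (⟨1, by omega⟩ : Fin n)
              = ⟨0, by omega⟩ :=
            P1_apply hn hm _ _ (Or.inr (Or.inl ⟨rfl, rfl⟩))
          have e5 : cyc n (List.range' 1 n) (⟨0, by omega⟩ : Fin n) = ⟨1, by omega⟩ :=
            H_apply hn _ _ (Or.inl rfl)
          have e6 : cyc n (List.range' 2 (n - 1)) x = ⟨1, by omega⟩ :=
            V4_apply hn x _ (Or.inr (Or.inr ⟨hn1, rfl⟩))
          exact congrArg Fin.val ((app_congr _ (app_congr _ (app_congr _ (app_congr _ e1 e2) e3) e4) e5).trans e6.symm)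
        · have h13 : 1 ≤ x.val ∧ x.val ≤ n - 3 := by omega
          have e1 : (cyc n (List.range' 1 n))⁻¹ x = ⟨x.val - 1, by omega⟩ :=
            Hinv_apply hn x _ (Or.inl (by show x.val - 1 + 1 = x.val; omega))
          have e2 : (cyc n (List.range' 1 n) ^ 3) (⟨x.val - 1, by omega⟩ : Fin n)
              = ⟨x.val + 2, by omega⟩ := by
            rw [Hpow_apply hn]
            exact Fin.ext (mod_helper n _ _ (Or.inr (by show x.val - 1 + 3 = x.val + 2; omega))
              (by omega))
          have e5 : cyc n (List.range' 1 n) x = ⟨x.val + 1, by omega⟩ :=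
            H_apply hn x _ (Or.inl rfl)
          have e6 : cyc n (List.range' 2 (n - 1)) x = ⟨x.val + 1, by omega⟩ :=
            V4_apply hn x _ (Or.inr (Or.inl ⟨by omega, by omega, rfl⟩))
          rcases Nat.even_or_odd x.val with ⟨r, hr⟩ | ⟨r, hr⟩
          · have e3 : cyc n ((List.range' 3 ((n - 1) / 2) 2).reverse)
                (⟨x.val + 2, by omega⟩ : Fin n) = x :=
              P2_apply hn hm _ x (Or.inr (Or.inl ⟨r + 1,
                by show x.val + 2 = 2 * (r + 1); omega,
                by show 4 ≤ x.val + 2; omega, by show x.val = x.val + 2 - 2; omega⟩))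
            have e4 : cyc n (1 :: (List.range' 2 ((n - 1) / 2) 2).reverse) x = x :=
              P1_apply hn hm x x (Or.inr (Or.inr (Or.inr ⟨r, by omega, by omega, rfl⟩)))
            exact congrArg Fin.val ((app_congr _ (app_congr _ (app_congr _ (app_congr _ e1 e2) e3) e4) e5).trans e6.symm)
          · have e3 : cyc n ((List.range' 3 ((n - 1) / 2) 2).reverse)
                (⟨x.val + 2, by omega⟩ : Fin n) = ⟨x.val + 2, by omega⟩ :=
              P2_apply hn hm _ _ (Or.inr (Or.inr ⟨Or.inr ⟨r + 1,
                by show x.val + 2 = 2 * (r + 1) + 1; omega⟩, rfl⟩))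
            have e4 : cyc n (1 :: (List.range' 2 ((n - 1) / 2) 2).reverse)
                (⟨x.val + 2, by omega⟩ : Fin n) = x :=
              P1_apply hn hm _ x (Or.inr (Or.inr (Or.inl ⟨r + 1,
                by show x.val + 2 = 2 * (r + 1) + 1; omega,
                by show 3 ≤ x.val + 2; omega, by show x.val = x.val + 2 - 2; omega⟩)))
            exact congrArg Fin.val ((app_congr _ (app_congr _ (app_congr _ (app_congr _ e1 e2) e3) e4) e5).trans e6.symm)

theorem stmt10 (n : ℕ) (hn : 5 ≤ n) (hno : Odd n) :
    OrigamiEquiv (Tact (OE5 n)) (OA2 n) ∧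
      OrigamiEquiv (Tact^[n - 3] (OA2 n)) (OE4 n) := by
  obtain ⟨m, hm0⟩ := hno
  have hm : n = 2 * m + 1 := by omega
  exact ⟨part1 n m hn hm, part2 n m hn hm⟩
end
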